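/- arXiv:2109.10012 — 5 statements merged into one kernel-verified Lean document; each statement's English description precedes it below -/
import Mathlib

section
/- Let s be a Lyndon word of length m ≥ 2 over {0,1}, let a = L(s) be its lexicographically largest cyclic permutation, let a^+ denote a with its last digit changed from 0 to 1, and let s^- denote s with its last digit changed from 1 to 0. Then the infinite sequence x = a^+ s^- a^∞ satisfies σ^n(x) ⪯ x for all n ≥ 0, i.e., every shift of x is lexicographically at most x. -/
/-- The cyclic rotation of a binary word `c` by `i`: `c_{i+1}…c_m c_1…c_i`. -/
def rot (c : List Bool) (i : ℕ) : List Bool := c.drop i ++ c.take i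

/-- The lexicographically largest cyclic rotation `L(s)` of `s`. -/
def maxRot (s : List Bool) : List Bool :=
  (List.range s.length).foldl (fun acc i => max acc (rot s i)) s

/-- The lexicographically smallest cyclic rotation `S(s)` of `s`. -/
def minRot (s : List Bool) : List Bool :=
  (List.range s.length).foldl (fun acc i => min acc (rot s i)) s

/-- A binary word is Lyndon if every proper suffix is strictly lexicographically
greater than the prefix of the same length. -/
def IsLyndon (s : List Bool) : Prop :=
  ∀ i, 0 < i → i < s.length → s.take (s.length - i) < s.drop i

/-- Left shift on sequences. -/
def shift (x : ℕ → Bool) (n : ℕ) : ℕ → Bool := fun i => x (n + i)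

/-- Strict lexicographic order on `{0,1}^ℕ`. -/
def seqLt (x y : ℕ → Bool) : Prop := ∃ n, (∀ i, i < n → x i = y i) ∧ x n < y n

/-- Lexicographic order on `{0,1}^ℕ`. -/
def seqLe (x y : ℕ → Bool) : Prop := seqLt x y ∨ x = y

/-- The periodic sequence `w^∞` with period block `w`. -/
def perSeq (w : List Bool) : ℕ → Bool := fun n => w.getD (n % w.length) false

/-- The sequence starting with the word `w` followed by the sequence `x`. -/
def app (w : List Bool) (x : ℕ → Bool) : ℕ → Bool := fun n => w.getD n (x (n - w.length))

section Aux

lemma bool_lt_iff {x y : Bool} : x < y ↔ x = false ∧ y = true := by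
  cases x <;> cases y <;> simp

lemma lex_of_firstDiff : ∀ (q : ℕ) (u v : List Bool), q < u.length → q < v.length →
    (∀ i, i < q → u.getD i false = v.getD i false) →
    u.getD q false = false → v.getD q false = true → u < v := by
  intro q
  induction q with
  | zero =>
    intro u v hu hv _ h1 h2
    match u, v with
    | a :: u', b :: v' =>
      simp only [List.getD_cons_zero] at h1 h2
      exact List.Lex.rel (by simp [h1, h2])
  | succ q ih =>
    intro u v hu hv hag h1 h2
    match u, v with
    | a :: u', b :: v' =>
      have h0 : a = b := by
        have := hag 0 (Nat.succ_pos q); simpa using this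
      subst h0
      apply List.Lex.cons
      exact ih u' v' (by simpa using hu) (by simpa using hv)
        (fun i hi => by simpa using hag (i+1) (by omega))
        (by simpa using h1) (by simpa using h2)

lemma firstDiff (u v : List Bool) (hl : u.length = v.length) (hne : u ≠ v) :
    ∃ q, q < u.length ∧ (∀ i, i < q → u.getD i false = v.getD i false) ∧
      u.getD q false ≠ v.getD q false := by
  have hex : ∃ q, u.getD q false ≠ v.getD q false := by
    by_contra h
    push_neg at h
    apply hne
    apply List.ext_getElem hl
    intro n h1 h2
    have := h n
    rwa [List.getD_eq_getElem _ _ h1, List.getD_eq_getElem _ _ h2] at this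
  refine ⟨Nat.find hex, ?_, fun i hi => by simpa using Nat.find_min hex hi, Nat.find_spec hex⟩
  by_contra h
  push_neg at h
  exact Nat.find_spec hex (by
    rw [List.getD_eq_default _ _ h, List.getD_eq_default _ _ (hl ▸ h)])

lemma le_pointwise (u v : List Bool) (hl : u.length = v.length) (hle : u ≤ v)
    (q : ℕ) (hq : q < u.length)
    (hagree : ∀ i, i < q → u.getD i false = v.getD i false)
    (hne : u.getD q false ≠ v.getD q false) :
    u.getD q false = false ∧ v.getD q false = true := by
  cases hu : u.getD q false <;> cases hv : v.getD q false
  · exact absurd (hu.trans hv.symm) hne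
  · exact ⟨rfl, rfl⟩
  · exfalso
    have : v < u := lex_of_firstDiff q v u (hl ▸ hq) hq
      (fun i hi => (hagree i hi).symm) hv hu
    exact absurd hle (not_le.mpr this)
  · exact absurd (hu.trans hv.symm) hne

lemma lt_pointwise (u v : List Bool) (hl : u.length = v.length) (hlt : u < v) :
    ∃ q, q < u.length ∧ (∀ i, i < q → u.getD i false = v.getD i false) ∧
      u.getD q false = false ∧ v.getD q false = true := by
  obtain ⟨q, hq, hag, hne⟩ := firstDiff u v hl hlt.ne
  exact ⟨q, hq, hag, le_pointwise u v hl hlt.le q hq hag hne⟩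

lemma rot_length (c : List Bool) (i : ℕ) : (rot c i).length = c.length := by
  simp only [rot, List.length_append, List.length_drop, List.length_take]
  omega

lemma rot_getD (c : List Bool) (k i : ℕ) (hk : k ≤ c.length) (hi : i < c.length) :
    (rot c k).getD i false = c.getD ((k + i) % c.length) false := by
  have hlen : (rot c k).length = c.length := rot_length c k
  rw [List.getD_eq_getElem _ _ (hlen ▸ hi)]
  by_cases h : i < c.length - k
  · have h1 : i < (c.drop k).length := by simp; omega
    rw [show ((rot c k)[i]'(hlen ▸ hi) = (c.drop k ++ c.take k)[i]'(by simp; omega)) from rfl]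
    rw [List.getElem_append_left h1, List.getElem_drop]
    have hmm : (k + i) % c.length = k + i := Nat.mod_eq_of_lt (by omega)
    rw [hmm, List.getD_eq_getElem _ _ (by omega)]
  · have h1 : (c.drop k).length ≤ i := by simp; omega
    rw [show ((rot c k)[i]'(hlen ▸ hi) = (c.drop k ++ c.take k)[i]'(by simp; omega)) from rfl]
    rw [List.getElem_append_right h1]
    rw [List.getElem_take]
    have hmm : (k + i) % c.length = k + i - c.length := by
      rw [Nat.mod_eq_sub_mod (by omega), Nat.mod_eq_of_lt (by omega)]
    rw [hmm, List.getD_eq_getElem _ _ (by simp at h1 ⊢; omega)]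
    congr 1
    simp only [List.length_drop]
    omega

lemma foldl_max_spec (f : ℕ → List Bool) (l : List ℕ) (init : List Bool) :
    (l.foldl (fun acc i => max acc (f i)) init = init ∨
      ∃ i ∈ l, l.foldl (fun acc i => max acc (f i)) init = f i) ∧
    (init ≤ l.foldl (fun acc i => max acc (f i)) init) ∧
    ∀ i ∈ l, f i ≤ l.foldl (fun acc i => max acc (f i)) init := by
  induction l generalizing init with
  | nil => simp
  | cons b t ih =>
    simp only [List.foldl_cons]
    obtain ⟨h1, h2, h3⟩ := ih (max init (f b))
    refine ⟨?_, le_trans (le_max_left _ _) h2, ?_⟩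
    · rcases h1 with h | ⟨i, hi, he⟩
      · rcases max_choice init (f b) with hc | hc
        · left; rw [h, hc]
        · right; exact ⟨b, List.mem_cons_self, by rw [h, hc]⟩
      · right; exact ⟨i, List.mem_cons_of_mem _ hi, he⟩
    · intro i hi
      rcases List.mem_cons.mp hi with rfl | hi
      · exact le_trans (le_max_right _ _) h2
      · exact h3 _ hi

lemma seqLt_trans {x y z : ℕ → Bool} (h1 : seqLt x y) (h2 : seqLt y z) : seqLt x z := by
  obtain ⟨n1, ha1, hb1⟩ := h1; obtain ⟨n2, ha2, hb2⟩ := h2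
  rcases lt_trichotomy n1 n2 with h | h | h
  · exact ⟨n1, fun i hi => (ha1 i hi).trans (ha2 i (hi.trans h)), (ha2 n1 h) ▸ hb1⟩
  · subst h
    exact ⟨n1, fun i hi => (ha1 i hi).trans (ha2 i hi), lt_trans hb1 hb2⟩
  · exact ⟨n2, fun i hi => (ha1 i (hi.trans h)).trans (ha2 i hi), (ha1 n2 h) ▸ hb2⟩

lemma seqLt_of_lt_of_le {x y z : ℕ → Bool} (h1 : seqLt x y) (h2 : seqLe y z) : seqLt x z := by
  rcases h2 with h | rfl
  · exact seqLt_trans h1 h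
  · exact h1

lemma seqLt_of_le_of_lt {x y z : ℕ → Bool} (h1 : seqLe x y) (h2 : seqLt y z) : seqLt x z := by
  rcases h1 with h | rfl
  · exact seqLt_trans h h2
  · exact h2

lemma add_mod_mod (k i m : ℕ) : (k + i % m) % m = (k + i) % m := by
  conv_lhs => rw [Nat.add_mod]
  rw [Nat.mod_mod_of_dvd i dvd_rfl, ← Nat.add_mod]

end Aux

/-- For a Lyndon word `s` of length `≥ 2` with `a = L(s)`, every shift of the sequence
`x = a⁺ s⁻ a^∞` is lexicographically at most `x`. -/
theorem stmt2 (s : List Bool) (hm : 2 ≤ s.length) (hL : IsLyndon s) :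
    ∀ n, seqLe
      (shift (app ((maxRot s).dropLast ++ [true])
        (app (s.dropLast ++ [false]) (perSeq (maxRot s)))) n)
      (app ((maxRot s).dropLast ++ [true])
        (app (s.dropLast ++ [false]) (perSeq (maxRot s)))) := by
  -- basic facts about maxRot
  obtain ⟨hrot0, -, hmax0⟩ := foldl_max_spec (rot s) (List.range s.length) s
  have hkex : ∃ k, k < s.length ∧ maxRot s = rot s k := by
    rcases hrot0 with h | ⟨i, hi, he⟩
    · exact ⟨0, by omega, by rw [show maxRot s = s from h]; simp [rot]⟩
    · exact ⟨i, List.mem_range.mp hi, he⟩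
  have hmax : ∀ r, r < s.length → rot s r ≤ maxRot s :=
    fun r hr => hmax0 r (List.mem_range.mpr hr)
  intro n
  set m := s.length with hm2
  set a := maxRot s with hadef
  obtain ⟨k, hk, hka⟩ := hkex
  have halen : a.length = m := by rw [hka, rot_length]
  set S := perSeq s with hSset
  set A := perSeq a with hAset
  set T := app (s.dropLast ++ [false]) A with hTdef
  set xx := app (a.dropLast ++ [true]) T with hxx
  have hSdef : ∀ i, S i = s.getD (i % m) false := by
    intro i; rw [hSset]
    show s.getD (i % s.length) false = s.getD (i % m) false
    rw [hm2]
  have hAdef : ∀ i, A i = a.getD (i % m) false := by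
    intro i; rw [hAset]
    show a.getD (i % a.length) false = a.getD (i % m) false
    rw [halen]
  have hSper : ∀ i, S (i + m) = S i := by
    intro i; rw [hSdef, hSdef]; congr 1; exact Nat.add_mod_right i m
  have hAper : ∀ i, A (i + m) = A i := by
    intro i; rw [hAdef, hAdef]; congr 1; exact Nat.add_mod_right i m
  have himod : ∀ i : ℕ, i % m < m := fun i => Nat.mod_lt i (by omega)
  have hAS : ∀ i, A i = S (k + i) := by
    intro i
    rw [hAdef, hSdef, hka, rot_getD s k (i % m) (by omega) (by have := himod i; omega)]
    congr 1
    rw [← hm2]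
    exact add_mod_mod k i m
  -- pointwise maximality (P3)
  have hP3 : ∀ r, r < m → ∀ q, q < m → (∀ i, i < q → S (r+i) = A i) →
      S (r+q) ≠ A q → S (r+q) = false ∧ A q = true := by
    intro r hr q hq hag hne
    have hgd : ∀ i, i < m → (rot s r).getD i false = S (r+i) := by
      intro i hi
      rw [rot_getD s r i (by omega) (by omega), hSdef]
    have hgd2 : ∀ i, i < m → a.getD i false = A i := by
      intro i hi; rw [hAdef, Nat.mod_eq_of_lt hi]
    have := le_pointwise (rot s r) a (by rw [rot_length, halen])
      (hka ▸ hmax r (by omega)) q (by rw [rot_length]; omega)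
      (fun i hi => by rw [hgd i (by omega), hgd2 i (by omega)]; exact hag i hi)
      (by rw [hgd q hq, hgd2 q hq]; exact hne)
    rw [hgd q hq, hgd2 q hq] at this
    exact this
  -- pointwise Lyndon property (P2)
  have hP2 : ∀ r, 0 < r → r < m →
      ∃ q, q < m - r ∧ (∀ i, i < q → S i = S (r+i)) ∧ S q = false ∧ S (r+q) = true := by
    intro r h0 hr
    have hlt := hL r h0 (by omega)
    have hlen : (s.take (s.length - r)).length = (s.drop r).length := by simp
    obtain ⟨q, hq, hag, h1, h2⟩ := lt_pointwise _ _ hlen hlt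
    have hqlen : q < m - r := by simp at hq; omega
    have htake : ∀ i, i < m - r → (s.take (s.length - r)).getD i false = S i := by
      intro i hi
      rw [List.getD_eq_getElem _ _ (by simp; omega), List.getElem_take, hSdef,
        Nat.mod_eq_of_lt (by omega), List.getD_eq_getElem _ _ (by omega)]
    have hdrop : ∀ i, i < m - r → (s.drop r).getD i false = S (r+i) := by
      intro i hi
      rw [List.getD_eq_getElem _ _ (by simp; omega), List.getElem_drop, hSdef,
        Nat.mod_eq_of_lt (by omega), List.getD_eq_getElem _ _ (by omega)]
    refine ⟨q, hqlen, fun i hi => ?_, ?_, ?_⟩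
    · rw [← htake i (by omega), ← hdrop i (by omega)]; exact hag i hi
    · rw [← htake q hqlen]; exact h1
    · rw [← hdrop q hqlen]; exact h2
  -- P3 for rotations of a
  have hP3' : ∀ j, j < m → ∀ q, q < m → (∀ i, i < q → A (j+i) = A i) →
      A (j+q) ≠ A q → A (j+q) = false ∧ A q = true := by
    intro j hj q hq hag hne
    have hr : (k + j) % m < m := himod _
    have key : ∀ i, S ((k+j) % m + i) = A (j + i) := by
      intro i
      rw [hAS (j+i), hSdef, hSdef]
      congr 1
      rw [Nat.mod_add_mod, ← Nat.add_assoc]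
    have hres := hP3 ((k+j) % m) hr q hq
      (fun i hi => by rw [key]; exact hag i hi) (by rw [key]; exact hne)
    rw [key q] at hres
    exact hres
  -- primitivity (P4)
  have hP4 : ∀ j, 0 < j → j < m → ∃ i, i < m ∧ A (j+i) ≠ A i := by
    intro j h0 hj
    by_contra h
    push_neg at h
    have hAall : ∀ i, A (j + i) = A i := by
      intro i
      have h1 : A (j + i) = A (j + i % m) := by
        rw [hAdef, hAdef]; congr 1; rw [add_mod_mod]
      have h2 : A (i % m) = A i := by
        rw [hAdef, hAdef]; congr 1; exact Nat.mod_mod_of_dvd i dvd_rfl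
      rw [h1, h (i % m) (himod i), h2]
    have he1 : ∀ y, S y = A (y + (m - k)) := by
      intro y
      rw [hAS (y + (m-k)), show k + (y + (m-k)) = y + m from by omega, hSper]
    have hSall : ∀ y, S (j + y) = S y := by
      intro y
      rw [he1 (j+y), he1 y, show j + y + (m-k) = j + (y + (m-k)) from by omega, hAall]
    obtain ⟨q, hq, hag, h1, h2⟩ := hP2 j h0 hj
    rw [hSall q, h1] at h2
    exact absurd h2 (by simp)
  -- endpoints
  have hSlast : S (m-1) = true := by
    obtain ⟨q, hq, _, h1, h2⟩ := hP2 (m-1) (by omega) (by omega)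
    have hq0 : q = 0 := by omega
    subst hq0
    rwa [Nat.add_zero] at h2
  have hS0 : S 0 = false := by
    obtain ⟨q, hq, _, h1, h2⟩ := hP2 (m-1) (by omega) (by omega)
    have hq0 : q = 0 := by omega
    subst hq0
    exact h1
  have hA0 : A 0 = true := by
    rcases eq_or_ne (S (m-1+0)) (A 0) with hc | hc
    · rw [← hc, Nat.add_zero]; exact hSlast
    · exact (hP3 (m-1) (by omega) 0 (by omega) (fun i hi => absurd hi (by omega)) hc).2
  have hAlast : A (m-1) = false := by
    by_contra hcon
    have hAt : A (m-1) = true := by revert hcon; cases A (m-1) <;> simp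
    obtain ⟨w, hw, hwne⟩ := hP4 (m-1) (by omega) (by omega)
    have hex : ∃ i, A (m-1 + i) ≠ A i := ⟨w, hwne⟩
    have hqspec := Nat.find_spec hex
    have hqmin : ∀ i, i < Nat.find hex → A (m-1+i) = A i :=
      fun i hi => not_ne_iff.mp (Nat.find_min hex hi)
    set q := Nat.find hex with hqd
    have hqlt : q < m := lt_of_le_of_lt (Nat.find_le hwne) hw
    obtain ⟨h1, h2⟩ := hP3' (m-1) (by omega) q hqlt hqmin hqspec
    rcases Nat.eq_zero_or_pos q with hq0 | hq0
    · rw [hq0, Nat.add_zero] at h1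
      rw [hAt] at h1
      exact absurd h1 (by simp)
    · have hstep : ∀ i, 1 ≤ i → i < q → A (i-1) = A i := by
        intro i h1i h2i
        have hmi := hqmin i h2i
        rwa [show m-1+i = (i-1) + m from by omega, hAper] at hmi
      have hchain : ∀ i, i < q → A i = A 0 := by
        intro i
        induction i with
        | zero => intro _; rfl
        | succ p ihp =>
          intro hp
          rw [← hstep (p+1) (by omega) hp]
          simpa using ihp (by omega)
      have hA0q : A 0 = true := by
        have h00 := hqmin 0 hq0
        rw [Nat.add_zero] at h00
        rw [← h00]; exact hAt
      rw [show m-1+q = (q-1)+m from by omega, hAper, hchain (q-1) (by omega), hA0q] at h1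
      exact absurd h1 (by simp)
  -- unbordered (P7)
  have hP7 : ∀ j, 0 < j → j < m → ¬(∀ i, i < m - j → A (j+i) = A i) := by
    intro j h0 hj hbord
    by_cases hc : ∀ p, p < j → A ((m-j)+p) = A p
    · obtain ⟨w, hw, hwne⟩ := hP4 j h0 hj
      apply hwne
      by_cases hwc : w < m - j
      · exact hbord w hwc
      · have hp : w - (m-j) < j := by omega
        have e1 : A (j + w) = A (w - (m-j)) := by
          rw [show j + w = (w - (m-j)) + m from by omega, hAper]
        rw [e1, ← hc _ hp, show (m-j) + (w - (m-j)) = w from by omega]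
    · push_neg at hc
      obtain ⟨w, hw, hwne⟩ := hc
      have hex : ∃ p, p < j ∧ A ((m-j)+p) ≠ A p := ⟨w, hw, hwne⟩
      have hspec := Nat.find_spec hex
      have hpmin : ∀ i, i < Nat.find hex → A ((m-j)+i) = A i := by
        intro i hi
        have hnm := Nat.find_min hex hi
        by_contra hne2
        exact hnm ⟨by omega, hne2⟩
      set p := Nat.find hex with hpd
      obtain ⟨hpj, hpne⟩ := hspec
      have hag1 : ∀ i, i < (m-j)+p → A (j+i) = A i := by
        intro i hi
        by_cases hil : i < m - j
        · exact hbord i hil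
        · have hip : i - (m-j) < p := by omega
          rw [show j + i = (i - (m-j)) + m from by omega, hAper, ← hpmin _ hip,
            show (m-j) + (i - (m-j)) = i from by omega]
      have hne1 : A (j + ((m-j)+p)) ≠ A ((m-j)+p) := by
        rw [show j + ((m-j)+p) = p + m from by omega, hAper]
        intro hpe
        exact hpne hpe.symm
      have c1 := hP3' j hj ((m-j)+p) (by omega) hag1 hne1
      have c2 := hP3' (m-j) (by omega) p (by omega) hpmin hpne
      rw [show j + ((m-j)+p) = p + m from by omega, hAper] at c1
      rw [c2.2] at c1
      exact absurd c1.1 (by simp)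
  -- lengths
  have hlen1 : (a.dropLast ++ [true]).length = m := by
    simp only [List.length_append, List.length_dropLast, List.length_singleton, halen]
    omega
  have hlen2 : (s.dropLast ++ [false]).length = m := by
    simp only [List.length_append, List.length_dropLast, List.length_singleton]
    omega
  -- values of xx and T
  have hx1 : ∀ i, i < m - 1 → xx i = A i := by
    intro i hi
    rw [hxx]
    simp only [app]
    rw [List.getD_eq_getElem _ _ (by rw [hlen1]; omega)]
    rw [List.getElem_append_left (by simp only [List.length_dropLast, halen]; omega)]
    rw [List.getElem_dropLast, hAdef, Nat.mod_eq_of_lt (by omega),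
      List.getD_eq_getElem _ _ (by omega)]
  have hx2 : xx (m-1) = true := by
    rw [hxx]
    simp only [app]
    rw [List.getD_eq_getElem _ _ (by rw [hlen1]; omega)]
    rw [List.getElem_append_right (by simp only [List.length_dropLast, halen]; omega)]
    simp [halen]
  have hx3 : ∀ i, xx (m + i) = T i := by
    intro i
    rw [hxx]
    simp only [app]
    rw [List.getD_eq_default _ _ (by rw [hlen1]; omega)]
    congr 1
    rw [hlen1]
    omega
  have hT1 : ∀ i, i < m - 1 → T i = S i := by
    intro i hi
    rw [hTdef]
    simp only [app]
    rw [List.getD_eq_getElem _ _ (by rw [hlen2]; omega)]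
    rw [List.getElem_append_left (by simp only [List.length_dropLast]; omega)]
    rw [List.getElem_dropLast, hSdef, Nat.mod_eq_of_lt (by omega),
      List.getD_eq_getElem _ _ (by omega)]
  have hT2 : T (m-1) = false := by
    rw [hTdef]
    simp only [app]
    rw [List.getD_eq_getElem _ _ (by rw [hlen2]; omega)]
    rw [List.getElem_append_right (by simp only [List.length_dropLast]; omega)]
    simp
  have hT3 : ∀ i, T (m + i) = A i := by
    intro i
    rw [hTdef]
    simp only [app]
    rw [List.getD_eq_default _ _ (by rw [hlen2]; omega)]
    congr 1
    rw [hlen2]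
    omega
  -- Q1 : every shift of a^∞ is ≤ a^∞
  have hQ1 : ∀ t, seqLe (fun i => A (t+i)) A := by
    intro t
    have hAt : ∀ i, A (t+i) = A (t % m + i) := by
      intro i
      rw [hAdef, hAdef]
      congr 1
      rw [Nat.mod_add_mod]
    by_cases ht0 : t % m = 0
    · right
      funext i
      rw [hAt, ht0, Nat.zero_add]
    · left
      obtain ⟨w, hw, hwne⟩ := hP4 (t % m) (by omega) (himod t)
      have hex : ∃ i, A (t % m + i) ≠ A i := ⟨w, hwne⟩
      have hqspec := Nat.find_spec hex
      have hqmin : ∀ i, i < Nat.find hex → A (t % m + i) = A i :=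
        fun i hi => not_ne_iff.mp (Nat.find_min hex hi)
      set q := Nat.find hex with hqd
      have hqlt : q < m := lt_of_le_of_lt (Nat.find_le hwne) hw
      obtain ⟨h1, h2⟩ := hP3' (t % m) (himod t) q hqlt hqmin hqspec
      exact ⟨q, fun i hi => by show A (t+i) = A i; rw [hAt]; exact hqmin i hi,
        by show A (t+q) < A q; rw [hAt, h1, h2]; decide⟩
  -- Q2 : a^∞ < xx
  have hQ2 : seqLt A xx :=
    ⟨m-1, fun i hi => (hx1 i hi).symm, by rw [hAlast, hx2]; decide⟩
  -- Q4
  have hQ4 : ∀ j', 0 < j' → j' < m → seqLt T (fun i => xx (j' + i)) := by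
    intro j' h0 hj
    have hB1 : ∀ i, i < m-1-j' → xx (j'+i) = A (j'+i) := fun i hi => hx1 (j'+i) (by omega)
    have hB2 : xx (j' + (m-1-j')) = true := by
      rw [show j' + (m-1-j') = m-1 from by omega]
      exact hx2
    have hAr : ∀ i, A (j'+i) = S ((k+j') % m + i) := by
      intro i
      rw [hAS, hSdef, hSdef]
      congr 1
      rw [Nat.mod_add_mod, Nat.add_assoc]
    by_cases hr0 : (k+j') % m = 0
    · refine ⟨m-1-j', fun i hi => ?_, ?_⟩
      · show T i = xx (j' + i)
        rw [hB1 i hi, hT1 i (by omega), hAr, hr0, Nat.zero_add]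
      · show T (m-1-j') < xx (j' + (m-1-j'))
        have hf : T (m-1-j') = false := by
          rw [hT1 _ (by omega)]
          have h' := hAr (m-1-j')
          rw [hr0, Nat.zero_add] at h'
          rw [← h', show j' + (m-1-j') = m-1 from by omega, hAlast]
        rw [hf, hB2]
        decide
    · obtain ⟨q, hq, hag, hq0, hq1⟩ := hP2 ((k+j') % m) (by omega) (himod _)
      by_cases hqc : q < m-1-j'
      · refine ⟨q, fun i hi => ?_, ?_⟩
        · show T i = xx (j' + i)
          rw [hT1 i (by omega), hB1 i (by omega), hAr, ← hag i hi]
        · show T q < xx (j' + q)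
          rw [hT1 q (by omega), hB1 q hqc, hAr, hq0, hq1]
          decide
      · refine ⟨m-1-j', fun i hi => ?_, ?_⟩
        · show T i = xx (j' + i)
          rw [hT1 i (by omega), hB1 i hi, hAr, ← hag i (by omega)]
        · show T (m-1-j') < xx (j' + (m-1-j'))
          have hf : S (m-1-j') = false := by
            rcases eq_or_lt_of_le (not_lt.mp hqc) with he | hlt2
            · rw [he]; exact hq0
            · rw [hag _ hlt2, ← hAr, show j' + (m-1-j') = m-1 from by omega]
              exact hAlast
          rw [hB2, hT1 _ (by omega), hf]
          decide
  -- Q5 : T < xx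
  have hQ5 : seqLt T xx :=
    ⟨0, fun i hi => absurd hi (by omega),
      by rw [hT1 0 (by omega), hx1 0 (by omega), hS0, hA0]; decide⟩
  -- main case analysis
  rcases Nat.lt_or_ge n m with hn | hn
  · rcases Nat.eq_zero_or_pos n with rfl | hn0
    · right
      funext i
      show xx (0 + i) = xx i
      rw [Nat.zero_add]
    · left
      by_cases hb : ∀ i, i < m-1-n → A (n+i) = A i
      · -- "border" case : agreement up to the flipped position
        have hAmn : A (m-1-n) = true := by
          by_contra hcon
          have hf : A (m-1-n) = false := by revert hcon; cases A (m-1-n) <;> simp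
          apply hP7 n hn0 hn
          intro i hi
          by_cases hic : i < m-1-n
          · exact hb i hic
          · have hie : i = m-1-n := by omega
            subst hie
            rw [show n + (m-1-n) = m-1 from by omega, hAlast, hf]
        obtain ⟨t, hagt, hltt⟩ := hQ4 (m-n) (by omega) (by omega)
        refine ⟨(m-n) + t, fun i hi => ?_, ?_⟩
        · show xx (n+i) = xx i
          by_cases h1 : i < m-1-n
          · rw [hx1 (n+i) (by omega), hb i h1, hx1 i (by omega)]
          · by_cases h2 : i = m-1-n
            · subst h2
              rw [show n + (m-1-n) = m-1 from by omega, hx2, hx1 _ (by omega), hAmn]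
            · have h3 : m - n ≤ i := by omega
              have h4 : i - (m-n) < t := by omega
              have e1 : xx (n+i) = T (i - (m-n)) := by
                rw [show n+i = m + (i - (m-n)) from by omega, hx3]
              have e2 : T (i - (m-n)) = xx ((m-n) + (i - (m-n))) := hagt _ h4
              rw [e1, e2, show (m-n) + (i - (m-n)) = i from by omega]
        · show xx (n + ((m-n)+t)) < xx ((m-n)+t)
          rw [show n + ((m-n)+t) = m + t from by omega, hx3]
          exact hltt
      · push_neg at hb
        obtain ⟨w, hw1, hw2⟩ := hb
        have hex : ∃ i, i < m-1-n ∧ A (n+i) ≠ A i := ⟨w, hw1, hw2⟩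
        have hspec := Nat.find_spec hex
        have hdmin : ∀ i, i < Nat.find hex → A (n+i) = A i := by
          intro i hi
          have hnm := Nat.find_min hex hi
          by_contra hne2
          exact hnm ⟨by omega, hne2⟩
        set d := Nat.find hex with hdd
        obtain ⟨hd1, hd2⟩ := hspec
        obtain ⟨h1, h2⟩ := hP3' n hn d (by omega) hdmin hd2
        refine ⟨d, fun i hi => ?_, ?_⟩
        · show xx (n+i) = xx i
          rw [hx1 (n+i) (by omega), hdmin i hi, hx1 i (by omega)]
        · show xx (n+d) < xx d
          rw [hx1 (n+d) (by omega), hx1 d (by omega), h1, h2]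
          decide
  · left
    rcases Nat.lt_or_ge n (2*m) with hn2 | hn2
    · rcases Nat.eq_or_lt_of_le hn with he | hlt
      · have hsh : (fun i => xx (n+i)) = T := funext fun i => by rw [← he, hx3]
        show seqLt (fun i => xx (n+i)) xx
        rw [hsh]
        exact hQ5
      · set j := n - m with hjd
        have hsh : (fun i => xx (n + i)) = (fun i => T (j + i)) :=
          funext fun i => by rw [show n+i = m + (j+i) from by omega, hx3]
        have step1 : seqLt (fun i => T (j+i)) (fun i => S (j+i)) := by
          refine ⟨m-1-j, fun i hi => ?_, ?_⟩
          · show T (j+i) = S (j+i)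
            rw [hT1 (j+i) (by omega)]
          · show T (j + (m-1-j)) < S (j + (m-1-j))
            rw [show j + (m-1-j) = m-1 from by omega, hT2, hSlast]
            decide
        have step2 : seqLe (fun i => S (j+i)) A := by
          have e : (fun i => S (j+i)) = (fun i => A ((j + (m-k)) + i)) := by
            funext i
            rw [hAS ((j + (m-k)) + i), show k + ((j + (m-k)) + i) = (j+i) + m from by omega,
              hSper]
          rw [e]
          exact hQ1 (j + (m-k))
        show seqLt (fun i => xx (n+i)) xx
        rw [hsh]
        exact seqLt_trans (seqLt_of_lt_of_le step1 step2) hQ2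
    · have hsh : (fun i => xx (n+i)) = (fun i => A ((n - 2*m) + i)) := by
        funext i
        rw [show n + i = m + ((n - m) + i) from by omega, hx3,
          show (n-m) + i = m + ((n - 2*m) + i) from by omega, hT3]
      show seqLt (fun i => xx (n+i)) xx
      rw [hsh]
      exact seqLt_of_le_of_lt (hQ1 (n - 2*m)) hQ2
end

section
/- Let s be a Lyndon word over {0,1} of length m ≥ 2, with a = L(s), s^- the word s with final digit 1 changed to 0, and a^+ the word a with final digit 0 changed to 1. For any binary sequences (c_i), (d_i) ∈ {0,1}^ℕ with d_1 = 1: if σ^n((c_i)) ≺ (d_i) for all n ≥ 0, then σ^n(Φ_s((c_i))) ≺ Φ_s((d_i)) for all n ≥ 0, where Φ_s is the coding that replaces the digit sequence block-by-block: the first digit 0 is replaced by s^-, the first digit 1 by a^+, and for consecutive digits, the pair 00 emits a, 01 emits a^+, 10 emits s^-, and 11 emits s at each position after the first. -/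
/-- The block emitted by the substitution `Φ_s` (with `a = L(s)`) for a pair of
consecutive digits: `00 ↦ a`, `01 ↦ a⁺`, `10 ↦ s⁻`, `11 ↦ s`. -/
def blk (s a : List Bool) : Bool → Bool → List Bool
  | false, false => a
  | false, true  => a.dropLast ++ [true]
  | true,  false => s.dropLast ++ [false]
  | true,  true  => s

/-- The substitution `Φ_s` on infinite sequences: the first block is `s⁻` if `r 0 = 0`
and `L(s)⁺` if `r 0 = 1`; block `j+1` is determined by the pair `(r j, r (j+1))`. -/
def subst (s : List Bool) (r : ℕ → Bool) : ℕ → Bool := fun n =>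
  let m := s.length
  let j := n / m
  (if j = 0 then blk s (maxRot s) (!(r 0)) (r 0)
   else blk s (maxRot s) (r (j - 1)) (r j)).getD (n % m) false

/-- The substitution `s • r` on finite words. -/
def substWord (s : List Bool) (r : List Bool) : List Bool :=
  match r with
  | [] => []
  | c :: _ =>
      blk s (maxRot s) (!c) c ++
        ((r.zip r.tail).map fun p => blk s (maxRot s) p.1 p.2).flatten

namespace SAux

abbrev gd (l : List Bool) (n : ℕ) : Bool := l.getD n false

lemma gd_append_left {l l' : List Bool} {n : ℕ} (h : n < l.length) :
    gd (l ++ l') n = gd l n := by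
  simp [gd, List.getD_eq_getElem?_getD, List.getElem?_append, h]

lemma gd_append_right {l l' : List Bool} {n : ℕ} (h : l.length ≤ n) :
    gd (l ++ l') n = gd l' (n - l.length) := by
  simp [gd, List.getD_eq_getElem?_getD, List.getElem?_append, Nat.not_lt.mpr h]

lemma gd_drop (l : List Bool) (i n : ℕ) : gd (l.drop i) n = gd l (i + n) := by
  simp [gd, List.getD_eq_getElem?_getD, List.getElem?_drop]

lemma gd_take {l : List Bool} {i n : ℕ} (h : n < i) : gd (l.take i) n = gd l n := by
  simp [gd, List.getD_eq_getElem?_getD, List.getElem?_take, h]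

lemma lex_idx : ∀ {l₁ l₂ : List Bool}, List.Lex (· < ·) l₁ l₂ → l₁.length = l₂.length →
    ∃ p, p < l₁.length ∧ (∀ i, i < p → gd l₁ i = gd l₂ i) ∧ gd l₁ p = false ∧ gd l₂ p = true := by
  intro l₁ l₂ h
  induction h with
  | nil => intro h; simp at h
  | @cons a t₁ t₂ h ih =>
      intro hlen
      simp only [List.length_cons, Nat.add_right_cancel_iff] at hlen
      obtain ⟨p, hp, heq, h1, h2⟩ := ih hlen
      refine ⟨p+1, by simpa using hp, ?_, by simpa [gd] using h1, by simpa [gd] using h2⟩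
      intro i hi
      match i with
      | 0 => rfl
      | (i+1) => simpa [gd] using heq i (by omega)
  | @rel a₁ t₁ a₂ t₂ hab =>
      refine fun _ => ⟨0, by simp, by omega, ?_, ?_⟩
      · simpa [gd] using (Bool.lt_iff.mp hab).1
      · simpa [gd] using (Bool.lt_iff.mp hab).2

lemma lt_idx {l₁ l₂ : List Bool} (h : l₁ < l₂) (hlen : l₁.length = l₂.length) :
    ∃ p, p < l₁.length ∧ (∀ i, i < p → gd l₁ i = gd l₂ i) ∧ gd l₁ p = false ∧ gd l₂ p = true :=
  lex_idx h hlen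

lemma rot_length (c : List Bool) (i : ℕ) : (rot c i).length = c.length := by
  simp [rot]; omega

lemma rot_zero (c : List Bool) : rot c 0 = c := by simp [rot]

lemma rot_gd {c : List Bool} {i n : ℕ} (hi : i < c.length) (hn : n < c.length) :
    gd (rot c i) n = gd c ((i + n) % c.length) := by
  rcases lt_or_ge n (c.length - i) with h | h
  · rw [rot, gd_append_left (by rw [List.length_drop]; omega), gd_drop,
      Nat.mod_eq_of_lt (by omega)]
  · rw [rot, gd_append_right (by rw [List.length_drop]; omega), List.length_drop,
      gd_take (by omega)]
    congr 1
    rw [Nat.mod_eq_sub_mod (by omega), Nat.mod_eq_of_lt (by omega)]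
    omega

lemma foldl_max_ge (f : ℕ → List Bool) :
    ∀ (l : List ℕ) (init : List Bool),
      init ≤ l.foldl (fun acc i => max acc (f i)) init ∧
      ∀ i ∈ l, f i ≤ l.foldl (fun acc i => max acc (f i)) init := by
  intro l
  induction l with
  | nil => exact fun init => ⟨le_refl _, by simp⟩
  | cons a t ih =>
      intro init
      have h := ih (max init (f a))
      constructor
      · exact le_trans (le_max_left _ _) h.1
      · intro i hi
        rcases List.mem_cons.mp hi with rfl | hi
        · exact le_trans (le_max_right _ _) h.1
        · exact h.2 i hi

lemma foldl_max_mem (f : ℕ → List Bool) :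
    ∀ (l : List ℕ) (init : List Bool),
      l.foldl (fun acc i => max acc (f i)) init = init ∨
      ∃ i ∈ l, l.foldl (fun acc i => max acc (f i)) init = f i := by
  intro l
  induction l with
  | nil => exact fun init => Or.inl rfl
  | cons a t ih =>
      intro init
      rcases ih (max init (f a)) with h | ⟨i, hi, h⟩
      · rcases max_choice init (f a) with h' | h'
        · exact Or.inl (by rw [List.foldl_cons, h, h'])
        · exact Or.inr ⟨a, by simp, by rw [List.foldl_cons, h, h']⟩
      · exact Or.inr ⟨i, by simp [hi], by rw [List.foldl_cons, h]⟩

lemma maxRot_spec (s : List Bool) (hm : 0 < s.length) :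
    (∃ k, k < s.length ∧ maxRot s = rot s k) ∧
    ∀ i, i < s.length → rot s i ≤ maxRot s := by
  constructor
  · rcases foldl_max_mem (rot s) (List.range s.length) s with h | ⟨i, hi, h⟩
    · exact ⟨0, hm, by rw [maxRot, h, rot_zero]⟩
    · exact ⟨i, List.mem_range.mp hi, h⟩
  · intro i hi
    exact (foldl_max_ge (rot s) (List.range s.length) s).2 i (List.mem_range.mpr hi)

section Facts

variable {s : List Bool} {k : ℕ}

/-- Lyndon strictness in index form. -/
lemma K1 (hL : IsLyndon s) : ∀ i, 0 < i → i < s.length →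
    ∃ p, p < s.length - i ∧ (∀ j, j < p → gd s j = gd s (i+j)) ∧
      gd s p = false ∧ gd s (i+p) = true := by
  intro i h1 h2
  have h := hL i h1 h2
  have hlen : (s.take (s.length - i)).length = (s.drop i).length := by simp
  obtain ⟨p, hp, heq, ha, hb⟩ := lt_idx h hlen
  rw [List.length_take] at hp
  have hp' : p < s.length - i := by omega
  refine ⟨p, hp', fun j hj => ?_, ?_, ?_⟩
  · have := heq j hj
    rwa [gd_take (by omega), gd_drop] at this
  · rwa [gd_take (by omega)] at ha
  · rwa [gd_drop] at hb

lemma aperiodic (hL : IsLyndon s) : ∀ e, 0 < e → e < s.length →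
    ¬ (∀ x, x < s.length → gd s x = gd s ((x+e) % s.length)) := by
  intro e h1 h2 hper
  obtain ⟨p, hp, _, ha, hb⟩ := K1 hL e h1 h2
  have := hper p (by omega)
  rw [Nat.mod_eq_of_lt (by omega)] at this
  rw [this, Nat.add_comm] at ha
  rw [ha] at hb
  exact Bool.false_ne_true hb

lemma maxRot_length (hm : 0 < s.length) : (maxRot s).length = s.length := by
  obtain ⟨⟨k, hk, hak⟩, _⟩ := maxRot_spec s hm
  rw [hak, rot_length]

variable (hk : k < s.length) (hak : maxRot s = rot s k)

include hk hak in
lemma A_gd {n : ℕ} (hn : n < s.length) : gd (maxRot s) n = gd s ((k+n) % s.length) := by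
  rw [hak, rot_gd hk hn]

omit hk hak in
lemma maxle (hm : 0 < s.length) : ∀ i, i < s.length →
    (∃ p, p < s.length ∧ (∀ j, j < p → gd s ((i+j) % s.length) = gd (maxRot s) j) ∧
      gd s ((i+p) % s.length) = false ∧ gd (maxRot s) p = true) ∨
    (∀ n, n < s.length → gd s ((i+n) % s.length) = gd (maxRot s) n) := by
  intro i hi
  rcases lt_or_eq_of_le ((maxRot_spec s hm).2 i hi) with h | h
  · left
    obtain ⟨p, hp, heq, ha, hb⟩ := lt_idx h (by rw [rot_length, maxRot_length hm])
    rw [rot_length] at hp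
    refine ⟨p, hp, fun j hj => ?_, ?_, ?_⟩
    · have := heq j hj; rwa [rot_gd hi (by omega)] at this
    · rwa [rot_gd hi hp] at ha
    · exact hb
  · right
    intro n hn
    rw [← h, rot_gd hi hn]

include hk hak in
lemma maxstrict (hm : 0 < s.length) (hL : IsLyndon s) : ∀ δ, 0 < δ → δ < s.length →
    ∃ p, p < s.length ∧
      (∀ i, i < p → gd (maxRot s) ((δ+i) % s.length) = gd (maxRot s) i) ∧
      gd (maxRot s) ((δ+p) % s.length) = false ∧ gd (maxRot s) p = true := by
  intro δ h1 h2
  set m := s.length with hmdef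
  set j := (k + δ) % m with hj
  have hjm : j < m := Nat.mod_lt _ hm
  have hjk : j ≠ k := by
    intro hkj
    rcases lt_or_ge (k + δ) m with hc | hc
    · rw [hj, Nat.mod_eq_of_lt hc] at hkj; omega
    · rw [hj, Nat.mod_eq_sub_mod hc, Nat.mod_eq_of_lt (by omega)] at hkj; omega
  have conv : ∀ i, gd (maxRot s) ((δ + i) % m) = gd s ((j + i) % m) := by
    intro i
    rw [A_gd hk hak (Nat.mod_lt _ hm), Nat.add_mod_mod, Nat.mod_add_mod, Nat.add_assoc]
  rcases maxle hm j hjm with ⟨p, hp, heq, ha, hb⟩ | heqall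
  · refine ⟨p, hp, fun i hi => ?_, ?_, hb⟩
    · rw [conv]; exact heq i hi
    · rw [conv]; exact ha
  · exfalso
    have P : ∀ n, n < m → gd s ((j+n) % m) = gd s ((k+n) % m) := by
      intro n hn
      rw [heqall n hn, A_gd hk hak hn]
    set e := (k + (m - j)) % m with he
    have hem : e < m := Nat.mod_lt _ hm
    have he0 : e ≠ 0 := by
      intro h0
      rcases lt_or_ge (k + (m - j)) m with hc | hc
      · rw [he, Nat.mod_eq_of_lt hc] at h0; omega
      · rw [he, Nat.mod_eq_sub_mod hc, Nat.mod_eq_of_lt (by omega)] at h0; omega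
    refine aperiodic hL e (by omega) hem (fun x hx => ?_)
    have hn : (x + (m - j)) % m < m := Nat.mod_lt _ hm
    have := P _ hn
    have e1 : (j + (x + (m - j)) % m) % m = x := by
      rw [Nat.add_mod_mod]
      have : j + (x + (m - j)) = x + m := by omega
      rw [this, Nat.add_mod_right, Nat.mod_eq_of_lt hx]
    have e2 : (k + (x + (m - j)) % m) % m = (x + e) % m := by
      rw [Nat.add_mod_mod, he, Nat.add_mod_mod]
      congr 1
      omega
    rwa [e1, e2] at this

omit hk hak in
lemma F2 (hm : 2 ≤ s.length) (hL : IsLyndon s) :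
    gd s 0 = false ∧ gd s (s.length - 1) = true := by
  obtain ⟨p, hp, _, ha, hb⟩ := K1 hL (s.length - 1) (by omega) (by omega)
  have hp0 : p = 0 := by omega
  subst hp0
  exact ⟨ha, by rwa [Nat.add_zero] at hb⟩

omit hk hak in
lemma F3a (hm : 2 ≤ s.length) (hL : IsLyndon s) : gd (maxRot s) 0 = true := by
  have hm1 : s.length - 1 < s.length := by omega
  have hs1 : gd s ((s.length - 1 + 0) % s.length) = gd s (s.length - 1) := by
    rw [Nat.add_zero, Nat.mod_eq_of_lt hm1]
  rcases maxle (by omega) (s.length - 1) hm1 with ⟨p, hp, heq, ha, hb⟩ | heq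
  · rcases Nat.eq_zero_or_pos p with rfl | hppos
    · exact hb
    · have := heq 0 hppos
      rw [hs1] at this
      rw [← this]
      exact (F2 hm hL).2
  · have := heq 0 (by omega)
    rw [hs1] at this
    rw [← this]
    exact (F2 hm hL).2

include hk hak in
lemma F3b (hm : 2 ≤ s.length) (hL : IsLyndon s) : gd (maxRot s) (s.length - 1) = false := by
  set m := s.length with hmdef
  obtain ⟨p, hp, heq, ha, hb⟩ := maxstrict hk hak (by omega) hL (m - 1) (by omega) (by omega)
  rcases Nat.eq_zero_or_pos p with rfl | hppos
  · rwa [Nat.add_zero, Nat.mod_eq_of_lt (by omega)] at ha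
  · have chain : ∀ i, i < p → gd (maxRot s) i = gd (maxRot s) 0 := by
      intro i
      induction i with
      | zero => intro _; rfl
      | succ i ih =>
          intro hi
          have h1 := heq (i+1) hi
          have : (m - 1 + (i + 1)) % m = i := by
            rw [Nat.mod_eq_sub_mod (by omega), Nat.mod_eq_of_lt (by omega)]
            omega
          rw [this] at h1
          rw [← h1]
          exact ih (by omega)
    have h0 := heq 0 hppos
    rw [Nat.add_zero, Nat.mod_eq_of_lt (by omega)] at h0
    have hap : (m - 1 + p) % m = p - 1 := by
      rw [Nat.mod_eq_sub_mod (by omega), Nat.mod_eq_of_lt (by omega)]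
      omega
    rw [hap] at ha
    rw [h0, ← chain (p-1) (by omega), ha]

include hk hak in
lemma factF1 (hm : 2 ≤ s.length) (hL : IsLyndon s) : ∀ t, 0 < t → t < s.length →
    ∃ p, p < s.length - t ∧ (∀ i, i < p → gd (maxRot s) (t+i) = gd (maxRot s) i) ∧
      gd (maxRot s) (t+p) = false ∧ gd (maxRot s) p = true := by
  intro t ht htm
  set m := s.length with hmdef
  obtain ⟨p, hp, heq, ha, hb⟩ := maxstrict hk hak (by omega) hL t ht htm
  by_cases hcase : p < m - t
  · refine ⟨p, hcase, fun i hi => ?_, ?_, hb⟩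
    · have := heq i hi; rwa [Nat.mod_eq_of_lt (by omega)] at this
    · rwa [Nat.mod_eq_of_lt (by omega)] at ha
  · exfalso
    set l := m - t with hldef
    have hl1 : 0 < l := by omega
    have hl2 : l < m := by omega
    have hlp : l ≤ p := by omega
    have ha' : gd (maxRot s) (p - l) = false := by
      rwa [Nat.mod_eq_sub_mod (by omega), Nat.mod_eq_of_lt (by omega),
        show t + p - m = p - l by omega] at ha
    have hmid : ∀ i, l ≤ i → i < p → gd (maxRot s) (i - l) = gd (maxRot s) i := by
      intro i h1 h2
      have := heq i h2
      rwa [Nat.mod_eq_sub_mod (by omega), Nat.mod_eq_of_lt (by omega),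
        show t + i - m = i - l by omega] at this
    have key : ∀ i, i < p - l → gd (maxRot s) (l + i) = gd (maxRot s) i := by
      intro i hi
      have := hmid (l + i) (by omega) (by omega)
      rw [show l + i - l = i by omega] at this
      exact this.symm
    obtain ⟨q, hq, heq2, ha2, hb2⟩ := maxstrict hk hak (by omega) hL l hl1 hl2
    rcases lt_trichotomy q (p - l) with h | h | h
    · have h1 := key q h
      rw [Nat.mod_eq_of_lt (by omega)] at ha2
      rw [ha2, hb2] at h1
      exact Bool.false_ne_true h1
    · rw [h, Nat.mod_eq_of_lt (by omega), show l + (p - l) = p by omega, hb] at ha2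
      exact Bool.false_ne_true ha2.symm
    · have h1 := heq2 (p - l) h
      rw [Nat.mod_eq_of_lt (by omega), show l + (p - l) = p by omega, hb, ha'] at h1
      exact Bool.false_ne_true h1.symm

include hk hak in
lemma factG (hm : 2 ≤ s.length) (hL : IsLyndon s) : ∀ t, 0 < t → t < s.length →
    (∃ p, p < t ∧ (∀ i, i < p → gd s i = gd (maxRot s) (s.length - t + i)) ∧
      gd s p = false ∧ gd (maxRot s) (s.length - t + p) = true) ∨
    (∀ i, i < t → gd s i = gd (maxRot s) (s.length - t + i)) := by
  intro t ht htm
  set m := s.length with hmdef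
  set j := (k + (m - t)) % m with hjdef
  have hjm : j < m := Nat.mod_lt _ (by omega)
  have conv : ∀ i, i < t → gd (maxRot s) (m - t + i) = gd s ((j + i) % m) := by
    intro i hi
    rw [A_gd hk hak (by omega), hjdef, Nat.mod_add_mod, Nat.add_assoc]
  rcases Nat.eq_zero_or_pos j with hj0 | hjpos
  · right
    intro i hi
    rw [conv i hi, hj0, Nat.zero_add, Nat.mod_eq_of_lt (by omega)]
  · obtain ⟨p, hp, heq, ha, hb⟩ := K1 hL j hjpos hjm
    by_cases hpt : p < t
    · left
      refine ⟨p, hpt, fun i hi => ?_, ha, ?_⟩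
      · rw [conv i (by omega), Nat.mod_eq_of_lt (by omega)]
        exact heq i hi
      · rw [conv p hpt, Nat.mod_eq_of_lt (by omega)]
        exact hb
    · right
      intro i hi
      rw [conv i hi, Nat.mod_eq_of_lt (by omega)]
      exact heq i (by omega)

omit hk hak in
lemma factH (hm : 2 ≤ s.length) : ∀ t, 0 < t → t < s.length →
    (∃ p, p < s.length - t ∧ (∀ i, i < p → gd s (t+i) = gd (maxRot s) i) ∧
      gd s (t+p) = false ∧ gd (maxRot s) p = true) ∨
    (∀ i, i < s.length - t → gd s (t+i) = gd (maxRot s) i) := by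
  intro t ht htm
  set m := s.length with hmdef
  rcases maxle (s := s) (by omega) t htm with ⟨p, hp, heq, ha, hb⟩ | heq
  · by_cases hcase : p < m - t
    · left
      refine ⟨p, hcase, fun i hi => ?_, ?_, hb⟩
      · have := heq i hi; rwa [Nat.mod_eq_of_lt (by omega)] at this
      · rwa [Nat.mod_eq_of_lt (by omega)] at ha
    · right
      intro i hi
      have := heq i (by omega)
      rwa [Nat.mod_eq_of_lt (by omega)] at this
  · right
    intro i hi
    have := heq i (by omega)
    rwa [Nat.mod_eq_of_lt (by omega)] at this

end Facts
end SAux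
namespace SAux
section Main

variable {s : List Bool}

lemma blk_gd (hm : 2 ≤ s.length) (hL : IsLyndon s) (x y : Bool) {i : ℕ} (hi : i < s.length) :
    gd (blk s (maxRot s) x y) i =
      if i = s.length - 1 then y else if x then gd s i else gd (maxRot s) i := by
  obtain ⟨⟨k, hk, hak⟩, -⟩ := maxRot_spec s (by omega)
  have hal : (maxRot s).length = s.length := maxRot_length (by omega)
  have hdlA : (maxRot s).dropLast.length = s.length - 1 := by
    rw [List.length_dropLast, hal]
  have hdlS : s.dropLast.length = s.length - 1 := List.length_dropLast
  cases x <;> cases y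
  · -- blk = maxRot s
    show gd (maxRot s) i = _
    by_cases h : i = s.length - 1
    · rw [if_pos h, h]
      exact F3b hk hak hm hL
    · rw [if_neg h, if_neg (by simp)]
  · -- blk = a⁺
    show gd ((maxRot s).dropLast ++ [true]) i = _
    by_cases h : i = s.length - 1
    · rw [if_pos h, gd_append_right (by omega), hdlA, h]
      simp [gd]
    · rw [if_neg h, if_neg (by simp), gd_append_left (by omega),
        List.dropLast_eq_take, gd_take (by omega)]
  · -- blk = s⁻
    show gd (s.dropLast ++ [false]) i = _
    by_cases h : i = s.length - 1
    · rw [if_pos h, gd_append_right (by omega), hdlS, h]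
      simp [gd]
    · rw [if_neg h, if_pos rfl, gd_append_left (by omega),
        List.dropLast_eq_take, gd_take (by omega)]
  · -- blk = s
    show gd s i = _
    by_cases h : i = s.length - 1
    · rw [if_pos h, h]
      exact (F2 hm hL).2
    · rw [if_neg h, if_pos rfl]

lemma substGet (hm : 2 ≤ s.length) (hL : IsLyndon s) (r : ℕ → Bool) (n : ℕ) :
    subst s r n = if n % s.length = s.length - 1 then r (n / s.length)
      else if (if n / s.length = 0 then !(r 0) else r (n / s.length - 1)) then gd s (n % s.length)
      else gd (maxRot s) (n % s.length) := by
  have hmod : n % s.length < s.length := Nat.mod_lt _ (by omega)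
  have hsub : subst s r n = gd (if n / s.length = 0 then blk s (maxRot s) (!(r 0)) (r 0)
      else blk s (maxRot s) (r (n / s.length - 1)) (r (n / s.length))) (n % s.length) := rfl
  rw [hsub]
  by_cases h : n / s.length = 0
  · rw [if_pos h, blk_gd hm hL _ _ hmod, h, if_pos rfl]
  · rw [if_neg h, blk_gd hm hL _ _ hmod, if_neg h]

lemma seqLt_intro {x y : ℕ → Bool} (N : ℕ) (he : ∀ i, i < N → x i = y i)
    (h1 : x N = false) (h2 : y N = true) : seqLt x y :=
  ⟨N, he, by rw [h1, h2]; exact Bool.false_lt_true⟩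

/-- Value of `Φ_s(d)` inside the first block, when `d 0 = true`. -/
lemma substD_small (hm : 2 ≤ s.length) (hL : IsLyndon s) {d : ℕ → Bool} (hd : d 0 = true)
    {i : ℕ} (hi : i < s.length) :
    subst s d i = if i = s.length - 1 then true else gd (maxRot s) i := by
  rw [substGet hm hL, Nat.div_eq_of_lt hi, Nat.mod_eq_of_lt hi, if_pos rfl, hd]
  by_cases h : i = s.length - 1
  · rw [if_pos h, if_pos h]
  · rw [if_neg h, if_neg h]
    simp

end Main
end SAux
namespace SAux
section Main2

variable {s : List Bool}

/-- The shared "continuation" endgame: the window agrees with `Φ_s(d)` on the first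
`m - t` characters and then reads the body of `s`; conclude it is strictly below. -/
lemma cont (hm : 2 ≤ s.length) (hL : IsLyndon s) {k : ℕ} (hk : k < s.length)
    (hak : maxRot s = rot s k) {d : ℕ → Bool} (hd : d 0 = true)
    {t : ℕ} (ht : 0 < t) (htm : t < s.length) (W : ℕ → Bool)
    (h1 : ∀ i, i < s.length - t → W i = subst s d i)
    (h2 : ∀ i, i < t → W (s.length - t + i) = gd s i) :
    seqLt W (subst s d) := by
  set m := s.length with hmdef
  have hDA : ∀ i, i < m → i ≠ m - 1 → subst s d i = gd (maxRot s) i := by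
    intro i him hine
    rw [substD_small hm hL hd him, if_neg hine]
  rcases factG hk hak hm hL t ht htm with ⟨p, hpt, heq, ha, hb⟩ | heqall
  · have hpl : p ≠ t - 1 := by
      intro hpe
      rw [hpe, show m - t + (t-1) = m - 1 by omega, F3b hk hak hm hL] at hb
      exact Bool.false_ne_true hb
    refine seqLt_intro (m - t + p) (fun i hi => ?_) ?_ ?_
    · rcases lt_or_ge i (m - t) with hc | hc
      · exact h1 i hc
      · have hι : i - (m - t) < p := by omega
        have hw := h2 (i - (m-t)) (by omega)
        rw [show m - t + (i - (m-t)) = i by omega] at hw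
        rw [hw, heq _ hι, show m - t + (i - (m-t)) = i by omega,
          hDA i (by omega) (by omega)]
    · rw [h2 p (by omega), ha]
    · rw [hDA _ (by omega) (by omega)]
      exact hb
  · refine seqLt_intro (m - 1) (fun i hi => ?_) ?_ ?_
    · rcases lt_or_ge i (m - t) with hc | hc
      · exact h1 i hc
      · have hι : i - (m - t) < t - 1 := by omega
        have hw := h2 (i - (m-t)) (by omega)
        rw [show m - t + (i - (m-t)) = i by omega] at hw
        rw [hw, heqall _ (by omega), show m - t + (i - (m-t)) = i by omega,
          hDA i (by omega) (by omega)]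
    · have hw := h2 (t-1) (by omega)
      rw [show m - t + (t - 1) = m - 1 by omega] at hw
      rw [hw, heqall (t-1) (by omega), show m - t + (t-1) = m-1 by omega]
      exact F3b hk hak hm hL
    · rw [substD_small hm hL hd (by omega), if_pos rfl]

end Main2
end SAux

/-- For a Lyndon word `s` of length `≥ 2` and sequences `c, d` with `d` beginning with
digit `1`: if every shift of `c` is strictly below `d`, then every shift of `Φ_s(c)` is
strictly below `Φ_s(d)`. -/
theorem stmt5 (s : List Bool) (hm : 2 ≤ s.length) (hL : IsLyndon s)
    (c d : ℕ → Bool) (hd : d 0 = true)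
    (h : ∀ n, seqLt (shift c n) d) :
    ∀ n, seqLt (shift (subst s c) n) (subst s d) := by
  classical
  obtain ⟨⟨k, hk, hak⟩, -⟩ := SAux.maxRot_spec s (by omega)
  set m := s.length with hmdef
  have hm0 : 0 < m := by omega
  intro n
  set q := n / m with hq
  set t := n % m with htdef
  have htm : t < m := Nat.mod_lt _ hm0
  have hn : m * q + t = n := Nat.div_add_mod n m
  clear_value q t
  have hdiv : ∀ b o : ℕ, o < m → (m * b + o) / m = b ∧ (m * b + o) % m = o := by
    intro b o ho
    constructor
    · rw [Nat.mul_add_div hm0, Nat.div_eq_of_lt ho, Nat.add_zero]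
    · rw [Nat.mul_add_mod, Nat.mod_eq_of_lt ho]
  have hW : ∀ (r : ℕ → Bool) (b o : ℕ), o < m → subst s r (m * b + o) =
      if o = m - 1 then r b else
      if (if b = 0 then !(r 0) else r (b - 1)) then SAux.gd s o else SAux.gd (maxRot s) o := by
    intro r b o ho
    rw [SAux.substGet hm hL, (hdiv b o ho).1, (hdiv b o ho).2]
  have hDA : ∀ i, i < m → i ≠ m - 1 → subst s d i = SAux.gd (maxRot s) i := by
    intro i him hine
    rw [SAux.substD_small hm hL hd him, if_neg hine]
  have hF2 := SAux.F2 hm hL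
  have hF3a := SAux.F3a hm hL
  rcases Nat.eq_zero_or_pos t with ht0 | htpos
  · -- aligned case t = 0
    cases hxq : (if q = 0 then !(c 0) else c (q - 1)) with
    | true =>
        -- current block is s or s⁻ : differs from a⁺ at position 0
        refine SAux.seqLt_intro 0 (fun i hi => absurd hi (Nat.not_lt_zero i)) ?_ ?_
        · show subst s c (n + 0) = false
          rw [show n + 0 = m * q + 0 by omega, hW c q 0 (by omega), if_neg (by omega),
            hxq, if_pos rfl]
          exact hF2.1
        · rw [SAux.substD_small hm hL hd (by omega), if_neg (by omega)]
          exact hF3a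
    | false =>
        cases hyq : c q with
        | false =>
            -- current block is a : differs from a⁺ at position m-1
            refine SAux.seqLt_intro (m-1) (fun i hi => ?_) ?_ ?_
            · show subst s c (n + i) = subst s d i
              rw [show n + i = m * q + i by omega, hW c q i (by omega),
                if_neg (by omega), hxq, hDA i (by omega) (by omega)]
              simp
            · show subst s c (n + (m-1)) = false
              rw [show n + (m-1) = m * q + (m-1) by omega, hW c q (m-1) (by omega),
                if_pos rfl]
              exact hyq
            · rw [SAux.substD_small hm hL hd (by omega), if_pos rfl]
        | true =>
            -- current block is a⁺ : use the hypothesis on shifts of c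
            obtain ⟨j, hje, hjlt⟩ := h q
            rw [Bool.lt_iff] at hjlt
            obtain ⟨hcj, hdj⟩ := hjlt
            have hj1 : 1 ≤ j := by
              rcases Nat.eq_zero_or_pos j with rfl | h1
              · have h0 : c (q + 0) = false := hcj
                rw [Nat.add_zero, hyq] at h0
                exact absurd h0 (by simp)
              · exact h1
            refine SAux.seqLt_intro (m * j + (m - 1)) (fun i hi => ?_) ?_ ?_
            · show subst s c (n + i) = subst s d i
              set b := i / m with hb
              set o := i % m with ho
              have hom : o < m := Nat.mod_lt _ hm0
              have hio : m * b + o = i := Nat.div_add_mod i m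
              clear_value b o
              have hblej : b ≤ j := by
                by_contra hcon
                push_neg at hcon
                have h1 : m * (j+1) ≤ m * b := Nat.mul_le_mul_left m hcon
                have h2 : m * (j + 1) = m * j + m * 1 := Nat.mul_add m j 1
                omega
              have hbj : b < j ∨ (b = j ∧ o < m - 1) := by
                rcases lt_or_eq_of_le hblej with h' | h'
                · exact Or.inl h'
                · have hmm : m * b = m * j := by rw [h']
                  exact Or.inr ⟨h', by omega⟩
              rw [show n + i = m * (q + b) + o by rw [Nat.mul_add]; omega,
                hW c (q+b) o hom, show i = m * b + o by omega, hW d b o hom]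
              by_cases hol : o = m - 1
              · rw [if_pos hol, if_pos hol]
                have hblt : b < j := by
                  rcases hbj with h' | ⟨h', h''⟩
                  · exact h'
                  · omega
                exact hje b hblt
              · rw [if_neg hol, if_neg hol]
                have hguard : (if q + b = 0 then !(c 0) else c (q + b - 1)) =
                    (if b = 0 then !(d 0) else d (b - 1)) := by
                  by_cases hb0 : b = 0
                  · rw [hb0, Nat.add_zero, hxq, if_pos rfl, hd]
                    simp
                  · rw [if_neg (show ¬(q + b = 0) by omega), if_neg hb0,
                      show q + b - 1 = q + (b-1) by omega]
                    exact hje (b-1) (by omega)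
                rw [hguard]
            · show subst s c (n + (m * j + (m-1))) = false
              rw [show n + (m * j + (m-1)) = m * (q + j) + (m-1) by rw [Nat.mul_add]; omega,
                hW c (q+j) (m-1) (by omega), if_pos rfl]
              exact hcj
            · rw [hW d j (m-1) (by omega), if_pos rfl]
              exact hdj
  · -- unaligned case 0 < t < m
    cases hxq : (if q = 0 then !(c 0) else c (q - 1)) with
    | false =>
        -- current block is a or a⁺
        obtain ⟨p, hp, heq, ha, hb⟩ := SAux.factF1 hk hak hm hL t htpos htm
        by_cases hpc : p < m - t - 1
        · refine SAux.seqLt_intro p (fun i hi => ?_) ?_ ?_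
          · show subst s c (n+i) = subst s d i
            rw [show n + i = m * q + (t + i) by omega, hW c q (t+i) (by omega),
              if_neg (by omega), hxq, hDA i (by omega) (by omega)]
            simpa using heq i hi
          · show subst s c (n+p) = false
            rw [show n + p = m * q + (t + p) by omega, hW c q (t+p) (by omega),
              if_neg (by omega), hxq]
            simpa using ha
          · rw [hDA p (by omega) (by omega)]
            exact hb
        · have hpe : t + p = m - 1 := by omega
          cases hyq : c q with
          | false =>
              refine SAux.seqLt_intro p (fun i hi => ?_) ?_ ?_
              · show subst s c (n+i) = subst s d i
                rw [show n + i = m * q + (t + i) by omega, hW c q (t+i) (by omega),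
                  if_neg (by omega), hxq, hDA i (by omega) (by omega)]
                simpa using heq i hi
              · show subst s c (n+p) = false
                rw [show n + p = m * q + (t + p) by omega, hW c q (t+p) (by omega),
                  if_pos hpe]
                exact hyq
              · rw [hDA p (by omega) (by omega)]
                exact hb
          | true =>
              refine SAux.cont hm hL hk hak hd htpos htm (shift (subst s c) n) ?_ ?_
              · intro i hi
                show subst s c (n+i) = subst s d i
                rcases lt_or_ge i p with hip | hip
                · rw [show n + i = m * q + (t + i) by omega, hW c q (t+i) (by omega),
                    if_neg (by omega), hxq, hDA i (by omega) (by omega)]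
                  simpa using heq i hip
                · have hip' : i = p := by omega
                  rw [hip', show n + p = m * q + (t + p) by omega,
                    hW c q (t+p) (by omega), if_pos hpe, hyq,
                    hDA p (by omega) (by omega), hb]
              · intro i hi
                show subst s c (n + (m - t + i)) = SAux.gd s i
                have hmul : m * (q + 1) = m * q + m := by ring
                have harith : n + (m - t + i) = m * (q+1) + i := by omega
                rw [harith, hW c (q+1) i (by omega), if_neg (show ¬(i = m - 1) by omega),
                  if_neg (Nat.succ_ne_zero q), Nat.add_sub_cancel, hyq, if_pos rfl]
    | true =>
        -- current block is s or s⁻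
        rcases SAux.factH hm t htpos htm with ⟨p, hp, heq, ha, hb⟩ | heqall
        · have hpne : t + p ≠ m - 1 := by
            intro he'
            have h2' := hF2.2
            rw [← he', ha] at h2'
            exact Bool.false_ne_true h2'
          refine SAux.seqLt_intro p (fun i hi => ?_) ?_ ?_
          · show subst s c (n+i) = subst s d i
            rw [show n + i = m * q + (t + i) by omega, hW c q (t+i) (by omega),
              if_neg (by omega), hxq, if_pos rfl, hDA i (by omega) (by omega)]
            exact heq i hi
          · show subst s c (n+p) = false
            rw [show n + p = m * q + (t + p) by omega, hW c q (t+p) (by omega),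
              if_neg hpne, hxq, if_pos rfl]
            exact ha
          · rw [hDA p (by omega) (by omega)]
            exact hb
        · have hA1 : SAux.gd (maxRot s) (m - t - 1) = true := by
            have hh := heqall (m - t - 1) (by omega)
            rw [show t + (m - t - 1) = m - 1 by omega] at hh
            rw [← hh]
            exact hF2.2
          cases hyq : c q with
          | false =>
              refine SAux.seqLt_intro (m - t - 1) (fun i hi => ?_) ?_ ?_
              · show subst s c (n+i) = subst s d i
                rw [show n + i = m * q + (t + i) by omega, hW c q (t+i) (by omega),
                  if_neg (by omega), hxq, if_pos rfl, hDA i (by omega) (by omega)]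
                exact heqall i (by omega)
              · show subst s c (n + (m - t - 1)) = false
                rw [show n + (m - t - 1) = m * q + (m - 1) by omega,
                  hW c q (m-1) (by omega), if_pos rfl]
                exact hyq
              · rw [hDA (m-t-1) (by omega) (by omega)]
                exact hA1
          | true =>
              refine SAux.cont hm hL hk hak hd htpos htm (shift (subst s c) n) ?_ ?_
              · intro i hi
                show subst s c (n+i) = subst s d i
                rcases lt_or_ge i (m - t - 1) with hip | hip
                · rw [show n + i = m * q + (t + i) by omega, hW c q (t+i) (by omega),
                    if_neg (by omega), hxq, if_pos rfl, hDA i (by omega) (by omega)]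
                  exact heqall i (by omega)
                · have hip' : i = m - t - 1 := by omega
                  rw [hip', show n + (m - t - 1) = m * q + (m-1) by omega,
                    hW c q (m-1) (by omega), if_pos rfl, hyq,
                    hDA (m-t-1) (by omega) (by omega), hA1]
              · intro i hi
                show subst s c (n + (m - t + i)) = SAux.gd s i
                have hmul : m * (q + 1) = m * q + m := by ring
                have harith : n + (m - t + i) = m * (q+1) + i := by omega
                rw [harith, hW c (q+1) i (by omega), if_neg (show ¬(i = m - 1) by omega),
                  if_neg (Nat.succ_ne_zero q), Nat.add_sub_cancel, hyq, if_pos rfl]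
end

section
/- Let s be a Lyndon word over {0,1} of length at least 2. Then the substitution map Φ_s is strictly increasing on {0,1}^ℕ with respect to lexicographic order: if (d_i) ≺ (d_i'), then Φ_s((d_i)) ≺ Φ_s((d_i')). -/
/-! ### Auxiliary lemmas -/

lemma length_rot (s : List Bool) (i : ℕ) : (rot s i).length = s.length := by
  simp [rot]; omega

private def mf (s : List Bool) : List Bool → ℕ → List Bool := fun acc i => max acc (rot s i)

lemma foldl_max_le_self (s : List Bool) :
    ∀ (l : List ℕ) (acc : List Bool), acc ≤ l.foldl (mf s) acc := by
  intro l
  induction l with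
  | nil => intro acc; exact le_refl _
  | cons x l ih =>
    intro acc
    calc acc ≤ max acc (rot s x) := le_max_left _ _
      _ ≤ _ := ih _

lemma foldl_max_le (s : List Bool) :
    ∀ (l : List ℕ) (acc : List Bool) (i : ℕ), i ∈ l → rot s i ≤ l.foldl (mf s) acc := by
  intro l
  induction l with
  | nil => intro acc i hi; simp at hi
  | cons x l ih =>
    intro acc i hi
    rcases List.mem_cons.mp hi with h | h
    · subst h
      calc rot s i ≤ max acc (rot s i) := le_max_right _ _
        _ ≤ _ := foldl_max_le_self s l _
    · exact ih _ i h

lemma foldl_max_mem (s : List Bool) :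
    ∀ (l : List ℕ) (acc : List Bool),
      l.foldl (mf s) acc = acc ∨ ∃ i ∈ l, l.foldl (mf s) acc = rot s i := by
  intro l
  induction l with
  | nil => intro acc; exact Or.inl rfl
  | cons x l ih =>
    intro acc
    rcases ih (max acc (rot s x)) with h | ⟨i, hi, h⟩
    · rcases max_choice acc (rot s x) with hc | hc
      · exact Or.inl (by simpa [mf, hc] using h)
      · exact Or.inr ⟨x, List.mem_cons_self, by simpa [mf, hc] using h⟩
    · exact Or.inr ⟨i, List.mem_cons_of_mem _ hi, h⟩

lemma rot_zero (s : List Bool) : rot s 0 = s := by simp [rot]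

lemma maxRot_eq_rot (s : List Bool) (hm : 1 ≤ s.length) :
    ∃ i, i < s.length ∧ maxRot s = rot s i := by
  rcases foldl_max_mem s (List.range s.length) s with h | ⟨i, hi, h⟩
  · exact ⟨0, by omega, by rw [rot_zero]; exact h⟩
  · exact ⟨i, List.mem_range.mp hi, h⟩

lemma rot_le_maxRot (s : List Bool) (i : ℕ) (hi : i < s.length) : rot s i ≤ maxRot s :=
  foldl_max_le s (List.range s.length) s i (List.mem_range.mpr hi)

lemma length_maxRot (s : List Bool) (hm : 1 ≤ s.length) : (maxRot s).length = s.length := by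
  obtain ⟨i, _, h⟩ := maxRot_eq_rot s hm
  rw [h, length_rot]

lemma lyndon_first_last (s : List Bool) (hm : 2 ≤ s.length) (hL : IsLyndon s) :
    s.getD 0 false = false ∧ s.getD (s.length - 1) false = true := by
  have h := hL (s.length - 1) (by omega) (by omega)
  rw [show s.length - (s.length - 1) = 1 by omega] at h
  have h1 : s.take 1 = [s.getD 0 false] := by
    rw [List.getD_eq_getElem _ _ (by omega)]
    rw [show (1 : ℕ) = 0 + 1 by rfl, ← List.take_concat_get' s 0 (by omega)]
    simp
  have h2 : s.drop (s.length - 1) = [s.getD (s.length - 1) false] := by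
    rw [List.getD_eq_getElem _ _ (by omega)]
    rw [List.drop_eq_getElem_cons (by omega : s.length - 1 < s.length)]
    rw [show s.length - 1 + 1 = s.length by omega]
    simp
  rw [h1, h2] at h
  have := (List.lex_singleton_iff _ _).mp h
  exact ⟨(Bool.lt_iff.mp this).1, (Bool.lt_iff.mp this).2⟩

lemma cons_le_cons_cancel {c : Bool} {l l' : List Bool} (h : c :: l ≤ c :: l') : l ≤ l' := by
  by_contra hc
  push_neg at hc
  exact absurd h (not_le.mpr (List.Lex.cons hc))

lemma le_head_true {l l' : List Bool} {c : Bool} (h : true :: l ≤ c :: l') : c = true := by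
  cases c with
  | true => rfl
  | false => exact absurd h (not_le.mpr (List.Lex.rel (by decide)))

lemma all_true_of_le (x : List Bool) (h : true :: x.dropLast ≤ x) : ∀ c ∈ x, c = true := by
  induction x with
  | nil =>
    exfalso
    exact absurd h (not_le.mpr (List.Lex.nil))
  | cons y t ih =>
    have hy : y = true := le_head_true h
    subst hy
    cases t with
    | nil => intro c hc; simpa using hc
    | cons t0 t1 =>
      rw [List.dropLast_cons₂] at h
      have h' : true :: (t0 :: t1).dropLast ≤ t0 :: t1 := cons_le_cons_cancel h
      intro c hc
      rcases List.mem_cons.mp hc with h1 | h1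
      · exact h1
      · exact ih h' c h1

lemma maxRot_head (s : List Bool) (hm : 2 ≤ s.length) (hL : IsLyndon s) :
    (maxRot s).getD 0 false = true := by
  have hlast := (lyndon_first_last s hm hL).2
  have hle : rot s (s.length - 1) ≤ maxRot s := rot_le_maxRot s _ (by omega)
  have hrot : rot s (s.length - 1) = true :: s.take (s.length - 1) := by
    unfold rot
    rw [List.drop_eq_getElem_cons (by omega : s.length - 1 < s.length)]
    rw [show s.length - 1 + 1 = s.length by omega]
    rw [List.getD_eq_getElem _ _ (by omega)] at hlast
    simp [hlast]
  rw [hrot] at hle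
  have hlen : (maxRot s).length = s.length := length_maxRot s (by omega)
  rcases hmr : maxRot s with _ | ⟨c, t⟩
  · rw [hmr] at hlen; simp at hlen; omega
  · rw [hmr] at hle
    have := le_head_true hle
    simp [this]

lemma false_mem_rot (s : List Bool) (hm : 2 ≤ s.length) (hL : IsLyndon s) (i : ℕ) :
    false ∈ rot s i := by
  have h0 := (lyndon_first_last s hm hL).1
  rw [List.getD_eq_getElem _ _ (by omega)] at h0
  have hmem : false ∈ s := h0 ▸ List.getElem_mem (by omega : 0 < s.length)
  rw [← List.take_append_drop i s] at hmem
  unfold rot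
  rcases List.mem_append.mp hmem with h | h
  · exact List.mem_append.mpr (Or.inr h)
  · exact List.mem_append.mpr (Or.inl h)

lemma maxRot_last (s : List Bool) (hm : 2 ≤ s.length) (hL : IsLyndon s) :
    (maxRot s).getD (s.length - 1) false = false := by
  obtain ⟨i, hi, hrot⟩ := maxRot_eq_rot s (by omega)
  have hhead := maxRot_head s hm hL
  -- i ≠ 0
  have hi0 : i ≠ 0 := by
    intro h
    subst h
    rw [rot_zero] at hrot
    rw [hrot] at hhead
    rw [(lyndon_first_last s hm hL).1] at hhead
    exact absurd hhead (by decide)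
  obtain ⟨k, rfl⟩ : ∃ k, i = k + 1 := ⟨i - 1, by omega⟩
  have hk : k < s.length := by omega
  -- structure of rot s (k+1)
  have hsplit : rot s (k + 1) = (s.drop (k+1) ++ s.take k) ++ [s[k]] := by
    unfold rot
    rw [← List.take_concat_get' s k hk]
    simp [List.append_assoc]
  by_contra hfalse
  have hlastval : (maxRot s).getD (s.length - 1) false = s[k] := by
    rw [hrot, hsplit]
    have hlen : (s.drop (k+1) ++ s.take k).length = s.length - 1 := by
      simp; omega
    rw [List.getD_append_right _ _ _ _ (by omega)]
    rw [hlen]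
    simp
  have hsk : s[k] = true := by
    cases hb : s[k] with
    | false => exact absurd (hlastval.trans hb) hfalse
    | true => rfl
  -- previous rotation
  have hprev : rot s k = s[k] :: (s.drop (k+1) ++ s.take k) := by
    unfold rot
    rw [List.drop_eq_getElem_cons hk, List.cons_append]
  have hle : rot s k ≤ maxRot s := rot_le_maxRot s k (by omega)
  rw [hprev, hsk, hrot, hsplit] at hle
  have hdl : ((s.drop (k+1) ++ s.take k) ++ [s[k]]).dropLast = s.drop (k+1) ++ s.take k :=
    List.dropLast_concat
  have hall := all_true_of_le ((s.drop (k+1) ++ s.take k) ++ [s[k]]) (by rw [hdl]; exact hle)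
  have hfmem : false ∈ (s.drop (k+1) ++ s.take k) ++ [s[k]] := by
    rw [← hsplit]; exact false_mem_rot s hm hL (k+1)
  exact absurd (hall false hfmem) (by decide)

/-! ### getD lemmas for blocks -/

lemma getD_dropLast_append {l : List Bool} {x : Bool} {k : ℕ} (hk : k < l.length - 1) :
    (l.dropLast ++ [x]).getD k false = l.getD k false := by
  rw [List.getD_append _ _ _ _ (by simp; omega)]
  rw [List.getD_eq_getElem _ _ (by simp; omega), List.getD_eq_getElem _ _ (by omega)]
  exact List.getElem_dropLast _

lemma getD_dropLast_append_last {l : List Bool} {x : Bool} (_hl : 1 ≤ l.length) :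
    (l.dropLast ++ [x]).getD (l.length - 1) false = x := by
  rw [List.getD_append_right _ _ _ _ (by simp)]
  simp

/-- For a Lyndon word `s` of length `≥ 2`, the substitution `Φ_s` is strictly
increasing on `{0,1}^ℕ` with respect to the lexicographic order. -/
theorem stmt6 (s : List Bool) (hm : 2 ≤ s.length) (hL : IsLyndon s)
    (d d' : ℕ → Bool) (h : seqLt d d') :
    seqLt (subst s d) (subst s d') := by
  obtain ⟨n, hpre, hnlt⟩ := h
  obtain ⟨hdn, hdn'⟩ := Bool.lt_iff.mp hnlt
  have hma : (maxRot s).length = s.length := length_maxRot s (by omega)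
  have ha0 : (maxRot s).getD 0 false = true := maxRot_head s hm hL
  have haL : (maxRot s).getD (s.length - 1) false = false := maxRot_last s hm hL
  have hs0 : s.getD 0 false = false := (lyndon_first_last s hm hL).1
  have hsL : s.getD (s.length - 1) false = true := (lyndon_first_last s hm hL).2
  have hm0 : 0 < s.length := by omega
  rcases Nat.eq_zero_or_pos n with hn0 | hnpos
  · subst hn0
    refine ⟨0, fun i hi => absurd hi (by omega), ?_⟩
    have e1 : subst s d 0 = false := by
      simp only [subst, Nat.zero_div, Nat.zero_mod, if_pos rfl, hdn]
      show (blk s (maxRot s) true false).getD 0 false = false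
      simp only [blk]
      rw [getD_dropLast_append (by omega)]
      exact hs0
    have e2 : subst s d' 0 = true := by
      simp only [subst, Nat.zero_div, Nat.zero_mod, if_pos rfl, hdn']
      show (blk s (maxRot s) false true).getD 0 false = true
      simp only [blk]
      rw [getD_dropLast_append (by omega)]
      exact ha0
    rw [e1, e2]; decide
  · refine ⟨n * s.length + (s.length - 1), ?_, ?_⟩
    · -- prefix agreement
      intro i hi
      have hidiv : i / s.length ≤ n := by
        have h1 : i < (n + 1) * s.length := by rw [add_mul, one_mul]; omega
        have := (Nat.div_lt_iff_lt_mul hm0).mpr h1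
        omega
      rcases lt_or_eq_of_le hidiv with hjlt | hjeq
      · -- block index < n : digits agree
        simp only [subst]
        rcases Nat.eq_zero_or_pos (i / s.length) with hj0 | hjpos
        · rw [hj0]
          rw [hpre 0 (by omega)]
        · rw [if_neg (by omega), if_neg (by omega)]
          rw [hpre (i / s.length - 1) (by omega), hpre (i / s.length) (by omega)]
      · -- block index = n : positions before m-1 agree
        have hkm : i % s.length < s.length - 1 := by
          have hdam := Nat.div_add_mod i s.length
          rw [hjeq] at hdam
          have hcomm : s.length * n = n * s.length := Nat.mul_comm _ _
          omega
        simp only [subst]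
        rw [← hjeq] at hpre hdn hdn'
        rw [if_neg (by omega), if_neg (by omega)]
        rw [hpre (i / s.length - 1) (by omega)]
        rw [hdn, hdn']
        cases hc : d' (i / s.length - 1) with
        | false =>
          show (blk s (maxRot s) false false).getD (i % s.length) false
              = (blk s (maxRot s) false true).getD (i % s.length) false
          simp only [blk]
          rw [getD_dropLast_append (by omega)]
        | true =>
          show (blk s (maxRot s) true false).getD (i % s.length) false
              = (blk s (maxRot s) true true).getD (i % s.length) false
          simp only [blk]
          rw [getD_dropLast_append (by omega)]
    · -- strict inequality at position n*m + (m-1)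
      have hdiv : (n * s.length + (s.length - 1)) / s.length = n := by
        rw [show n * s.length + (s.length - 1) = (s.length - 1) + s.length * n by ring]
        rw [Nat.add_mul_div_left _ _ hm0, Nat.div_eq_of_lt (by omega)]
        omega
      have hmod : (n * s.length + (s.length - 1)) % s.length = s.length - 1 := by
        rw [show n * s.length + (s.length - 1) = (s.length - 1) + s.length * n by ring]
        rw [Nat.add_mul_mod_self_left, Nat.mod_eq_of_lt (by omega)]
      simp only [subst, hdiv, hmod]
      rw [if_neg (by omega), if_neg (by omega)]
      rw [hpre (n - 1) (by omega), hdn, hdn']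
      cases hc : d' (n - 1) with
      | false =>
        show (blk s (maxRot s) false false).getD (s.length - 1) false
            < (blk s (maxRot s) false true).getD (s.length - 1) false
        simp only [blk]
        rw [haL]
        rw [show s.length - 1 = (maxRot s).length - 1 by omega]
        rw [getD_dropLast_append_last (by omega)]
        decide
      | true =>
        show (blk s (maxRot s) true false).getD (s.length - 1) false
            < (blk s (maxRot s) true true).getD (s.length - 1) false
        simp only [blk]
        rw [hsL]
        rw [getD_dropLast_append_last (by omega)]
        decide
end

section
/- For any two Lyndon words s and r over {0,1}, each of length at least 2, the word s • r := Φ_s(r) is again a Lyndon word (of length |s|·|r|). -/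
set_option linter.unreachableTactic false
set_option linter.unusedTactic false
set_option linter.unnecessarySeqFocus false

namespace SW

def val : List Bool → ℕ
  | [] => 0
  | b :: l => b.toNat * 2 ^ l.length + val l

lemma val_lt (l : List Bool) : val l < 2 ^ l.length := by
  induction l with
  | nil => simp [val]
  | cons b l ih => cases b <;> simp [val, pow_succ] <;> omega

lemma val_append (x y : List Bool) : val (x ++ y) = val x * 2 ^ y.length + val y := by
  induction x with
  | nil => simp [val]
  | cons b x ih => simp [val, ih, List.length_append, pow_add]; ring

lemma val_concat (x : List Bool) (b : Bool) : val (x ++ [b]) = 2 * val x + b.toNat := by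
  simp [val_append, val]; ring

lemma cons_lt_cons (x y : Bool) (u v : List Bool) :
    (x :: u) < (y :: v) ↔ x < y ∨ (x = y ∧ u < v) := by
  constructor
  · intro hlt
    rcases hlt with _ | h1 | h1
    · exact Or.inl (by assumption)
    · exact Or.inr ⟨rfl, by assumption⟩
  · rintro (h1 | ⟨rfl, h1⟩)
    · exact List.Lex.rel h1
    · exact List.Lex.cons h1

lemma lt_iff_val_lt : ∀ (u v : List Bool), u.length = v.length → (u < v ↔ val u < val v) := by
  intro u
  induction u with
  | nil =>
    intro v h; rw [List.length_nil] at h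
    rw [(List.length_eq_zero_iff).mp h.symm]; simp
  | cons x u ih =>
    intro v hlen
    match v with
    | y :: v =>
      simp only [List.length_cons, Nat.succ_inj] at hlen
      rw [cons_lt_cons]
      have hu := val_lt u
      have hv := val_lt v
      have hval : val (x :: u) = x.toNat * 2 ^ v.length + val u := by
        simp [val, hlen]
      have hval' : val (y :: v) = y.toNat * 2 ^ v.length + val v := by simp [val]
      rw [hval, hval']
      have hihv := ih v hlen
      rw [hlen] at hu
      constructor
      · rintro (h1 | ⟨rfl, h1⟩)
        · obtain ⟨rfl, rfl⟩ := Bool.lt_iff.mp h1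
          simp; omega
        · have := hihv.mp h1
          cases x <;> simp <;> omega
      · intro h1
        cases x <;> cases y <;> simp at h1 ⊢
        · exact hihv.mpr h1
        · omega
        · exact hihv.mpr (by omega)

lemma val_inj : ∀ (u v : List Bool), u.length = v.length → val u = val v → u = v := by
  intro u v h hv
  rcases lt_trichotomy u v with h1 | h1 | h1
  · rw [lt_iff_val_lt u v h] at h1; omega
  · exact h1
  · rw [lt_iff_val_lt v u h.symm] at h1; omega

lemma le_iff_val_le (u v : List Bool) (h : u.length = v.length) : u ≤ v ↔ val u ≤ val v := by
  rw [le_iff_lt_or_eq, lt_iff_val_lt u v h]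
  constructor
  · rintro (h1 | rfl) <;> omega
  · intro h1
    rcases Nat.lt_or_ge (val u) (val v) with h2 | h2
    · exact Or.inl h2
    · exact Or.inr (val_inj u v h (by omega))

lemma ext_le_lt {u v x y : List Bool} (hxy : x.length = y.length)
    (h : val u ≤ val v) (h2 : val x < val y) : val (u ++ x) < val (v ++ y) := by
  rw [val_append, val_append, hxy]
  have := Nat.mul_le_mul_right (2 ^ y.length) h
  omega

lemma ext_lt {u v x y : List Bool} (hxy : x.length = y.length)
    (h : val u < val v) : val (u ++ x) < val (v ++ y) := by
  rw [val_append, val_append, hxy]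
  have hx := val_lt x
  rw [hxy] at hx
  have : (val u + 1) * 2 ^ y.length ≤ val v * 2 ^ y.length :=
    Nat.mul_le_mul_right _ h
  nlinarith

lemma val_take_le {u v : List Bool} (n : ℕ) (hl : u.length = v.length) (h : val u ≤ val v) :
    val (u.take n) ≤ val (v.take n) := by
  by_contra hc
  push_neg at hc
  have hu : u = u.take n ++ u.drop n := (List.take_append_drop n u).symm
  have hv : v = v.take n ++ v.drop n := (List.take_append_drop n v).symm
  rw [hu, hv, val_append, val_append] at h
  have h1 : (u.drop n).length = (v.drop n).length := by simp [hl]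
  rw [h1] at h
  have h2 := val_lt (v.drop n)
  have : (val (v.take n) + 1) * 2 ^ (v.drop n).length ≤ val (u.take n) * 2 ^ (v.drop n).length :=
    Nat.mul_le_mul_right _ hc
  nlinarith

lemma false_mem_val : ∀ {l : List Bool}, false ∈ l → val l + 1 < 2 ^ l.length := by
  intro l
  induction l with
  | nil => intro h; simp at h
  | cons b l ih =>
    intro h
    rcases List.mem_cons.mp h with h1 | h1
    · have := val_lt l
      rw [← h1]
      simp [val, pow_succ]; omega
    · have := ih h1
      cases b <;> simp [val, pow_succ] <;> omega

variable (s : List Bool)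


section Fold
variable (s : List Bool)

lemma rot_length (p : ℕ) : (rot s p).length = s.length := by
  simp [rot]; omega

lemma init_le_fold : ∀ (l : List ℕ) (init : List Bool),
    init ≤ l.foldl (fun acc i => max acc (rot s i)) init := by
  intro l
  induction l with
  | nil => intro init; exact le_rfl
  | cons i l ih =>
    intro init
    exact le_trans (le_max_left _ _) (ih (max init (rot s i)))

lemma mem_le_fold : ∀ (l : List ℕ) (init : List Bool) (p : ℕ), p ∈ l →
    rot s p ≤ l.foldl (fun acc i => max acc (rot s i)) init := by
  intro l
  induction l with
  | nil => intro _ _ h; simp at h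
  | cons i l ih =>
    intro init p hp
    rcases List.mem_cons.mp hp with rfl | hp
    · exact le_trans (le_max_right _ _) (init_le_fold s l _)
    · exact ih _ p hp

lemma fold_cases : ∀ (l : List ℕ) (init : List Bool),
    l.foldl (fun acc i => max acc (rot s i)) init = init ∨
    ∃ p ∈ l, l.foldl (fun acc i => max acc (rot s i)) init = rot s p := by
  intro l
  induction l with
  | nil => intro init; exact Or.inl rfl
  | cons i l ih =>
    intro init
    rcases ih (max init (rot s i)) with h | ⟨p, hp, h⟩
    · rcases max_choice init (rot s i) with h2 | h2
      · exact Or.inl (by rw [List.foldl_cons, h, h2])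
      · exact Or.inr ⟨i, by simp, by rw [List.foldl_cons, h, h2]⟩
    · exact Or.inr ⟨p, by simp [hp], h⟩

lemma rot_le_maxRot {p : ℕ} (hp : p < s.length) : rot s p ≤ maxRot s :=
  mem_le_fold s _ _ p (List.mem_range.mpr hp)

lemma maxRot_eq_rot (hs : 0 < s.length) : ∃ k, k < s.length ∧ maxRot s = rot s k := by
  rcases fold_cases s (List.range s.length) s with h | ⟨p, hp, h⟩
  · exact ⟨0, hs, by rw [maxRot] at *; rw [h]; simp [rot]⟩
  · exact ⟨p, List.mem_range.mp hp, h⟩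

lemma maxRot_length (hs : 0 < s.length) : (maxRot s).length = s.length := by
  obtain ⟨k, _, h⟩ := maxRot_eq_rot s hs
  rw [h, rot_length]
end Fold

section Lyndon
variable {s : List Bool} (hs : 2 ≤ s.length) (hLs : IsLyndon s)

include hLs in
lemma lyndon_val {t : ℕ} (h0 : 0 < t) (h1 : t < s.length) :
    val (s.take (s.length - t)) < val (s.drop t) := by
  have h := hLs t h0 h1
  rwa [lt_iff_val_lt _ _ (by simp <;> omega)] at h

include hs hLs in
lemma lyndon_last : s.dropLast ++ [true] = s := by
  have hne : s ≠ [] := by intro h; rw [h] at hs; simp at hs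
  have hd := List.dropLast_append_getLast hne
  suffices h : s.getLast hne = true by rw [← h]; exact hd
  have h2 := hLs (s.length - 1) (by omega) (by omega)
  have hdrop : s.drop (s.length - 1) = [s.getLast hne] := by
    conv_lhs => rw [← hd]
    rw [List.drop_left' (by simp)]
  rw [hdrop, lt_iff_val_lt _ _ (by simp <;> omega)] at h2
  cases h : s.getLast hne
  · rw [h] at h2
    simp [val] at h2
  · rfl

include hs hLs in
lemma lyndon_head : s.take 1 = [false] := by
  obtain ⟨b, s₀, rfl⟩ : ∃ b s₀, s = b :: s₀ := by
    cases s with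
    | nil => simp at hs
    | cons b s₀ => exact ⟨b, s₀, rfl⟩
  have hne : (b::s₀) ≠ [] := by simp
  have hd := List.dropLast_append_getLast hne
  have h2 := hLs ((b::s₀).length - 1) (by simp at hs ⊢ <;> omega) (by simp at hs ⊢ <;> omega)
  have hdrop : (b::s₀).drop ((b::s₀).length - 1) = [(b::s₀).getLast hne] := by
    conv_lhs => rw [← hd]
    rw [List.drop_left' (by simp)]
  have htake : (b::s₀).length - ((b::s₀).length - 1) = 1 := by simp
  rw [htake, hdrop] at h2
  have hlen : ((b::s₀).take 1).length = ([(b::s₀).getLast hne] : List Bool).length := by simp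
  rw [lt_iff_val_lt _ _ hlen] at h2
  have htake1 : (b::s₀).take 1 = [b] := by simp
  rw [htake1] at h2
  cases b
  · rfl
  · exfalso
    simp [val] at h2
    have : ((true :: s₀).getLast hne).toNat ≤ 1 := Bool.toNat_le _
    omega
end Lyndon

section Core
variable {s : List Bool} (hs : 2 ≤ s.length) (hLs : IsLyndon s)

include hs hLs in
lemma head_decomp : ∃ s₀, s = false :: s₀ := by
  have h := lyndon_head hs hLs
  refine ⟨s.drop 1, ?_⟩
  conv_lhs => rw [← List.take_append_drop 1 s]
  rw [h]; rfl

include hs hLs in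
lemma maxRot_rot_pos : ∃ k, 0 < k ∧ k < s.length ∧ maxRot s = rot s k := by
  obtain ⟨k, hk, ha⟩ := maxRot_eq_rot s (by omega)
  refine ⟨k, ?_, hk, ha⟩
  rcases Nat.eq_zero_or_pos k with rfl | h
  swap
  · exact h
  exfalso
  have h0 : rot s 0 = s := by simp [rot]
  rw [h0] at ha
  have h1 : rot s 1 ≤ maxRot s := rot_le_maxRot s (by omega)
  rw [ha, le_iff_val_le _ _ (by rw [rot_length])] at h1
  have h2 : val s < val (rot s 1) := by
    conv_lhs => rw [← List.take_append_drop (s.length - 1) s]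
    rw [rot]
    exact ext_lt (by simp; omega) (lyndon_val hLs (by omega) (by omega))
  omega

include hs hLs in
lemma maxRot_last : (maxRot s).dropLast ++ [false] = maxRot s := by
  obtain ⟨k, hk0, hk, ha⟩ := maxRot_rot_pos hs hLs
  obtain ⟨k', rfl⟩ : ∃ k', k = k' + 1 := ⟨k - 1, by omega⟩
  obtain ⟨s₀, hs₀⟩ := head_decomp hs hLs
  have hk'm : k' < s.length := by omega
  have hx : s.take (k' + 1) = s.take k' ++ [s[k']] := by
    rw [← List.take_concat_get hk'm, List.concat_eq_append]
  have hd : maxRot s = (s.drop (k' + 1) ++ s.take k') ++ [s[k']] := by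
    rw [ha, rot, hx, List.append_assoc]
  have hrot' : rot s k' = s[k'] :: (s.drop (k' + 1) ++ s.take k') := by
    rw [rot, List.drop_eq_getElem_cons hk'm, List.cons_append]
  have hle : rot s k' ≤ maxRot s := rot_le_maxRot s hk'm
  rw [hrot', hd, le_iff_val_le _ _ (by simp; omega)] at hle
  have hvcons : val (s[k'] :: (s.drop (k' + 1) ++ s.take k')) =
      (s[k']).toNat * 2 ^ (s.drop (k' + 1) ++ s.take k').length +
        val (s.drop (k' + 1) ++ s.take k') := rfl
  rw [hvcons, val_concat] at hle
  have hdlen : (s.drop (k' + 1) ++ s.take k').length = s.length - 1 := by simp; omega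
  cases hxval : s[k'] with
  | false => rw [hd, hxval, List.dropLast_concat]
  | true =>
    exfalso
    rw [hxval] at hle
    rw [hdlen] at hle
    have hmem : false ∈ s.drop (k' + 1) ++ s.take k' := by
      rcases Nat.eq_zero_or_pos k' with rfl | hpos
      · subst hs₀; simp at hxval
      · apply List.mem_append_right
        rw [hs₀, List.take_cons hpos]
        exact List.mem_cons_self
    have := false_mem_val hmem
    rw [hdlen] at this
    simp at hle this
    omega

include hs hLs in
lemma core_lt : 2 * val s.dropLast + 1 ≤ 2 * val (maxRot s).dropLast := by
  have h1 : rot s 0 ≤ maxRot s := rot_le_maxRot s (by omega)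
  have h0 : rot s 0 = s := by simp [rot]
  rw [h0, le_iff_val_le _ _ (by rw [maxRot_length s (by omega)])] at h1
  have hv1 : val s = 2 * val s.dropLast + 1 := by
    conv_lhs => rw [← lyndon_last hs hLs]
    rw [val_concat]; rfl
  have hv2 : val (maxRot s) = 2 * val (maxRot s).dropLast := by
    conv_lhs => rw [← maxRot_last hs hLs]
    rw [val_concat]; rfl
  omega

include hs hLs in
lemma WK {t : ℕ} (h0 : 0 < t) (h1 : t < s.length) :
    val (s.take (s.length - t)) ≤ val ((maxRot s).drop t) := by
  obtain ⟨k, hk0, hk, ha⟩ := maxRot_rot_pos hs hLs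
  rw [ha, rot]
  rcases lt_trichotomy (k + t) s.length with hc | hc | hc
  · -- a.drop t = s.drop (k+t) ++ s.take k
    have hdrop : (s.drop k ++ s.take k).drop t = s.drop (k + t) ++ s.take k := by
      rw [List.drop_append, List.drop_drop]
      have : t - (s.drop k).length = 0 := by simp; omega
      rw [this, List.drop_zero]
    rw [hdrop]
    have hsplit : s.take (s.length - t) =
        s.take (s.length - (k + t)) ++ (s.take (s.length - t)).drop (s.length - (k + t)) := by
      conv_lhs => rw [← List.take_append_drop (s.length - (k+t)) (s.take (s.length - t))]
      rw [List.take_take, min_eq_left (by omega)]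
    rw [hsplit]
    apply le_of_lt
    apply ext_lt
    · rw [List.drop_take]
      simp
      omega
    · exact lyndon_val hLs (by omega) hc
  · -- equality case
    have hdrop : (s.drop k ++ s.take k).drop t = s.take k := by
      rw [List.drop_append]
      have h2 : (s.drop k).drop t = [] := by
        apply List.drop_eq_nil_of_le
        simp
        omega
      have h3 : t - (s.drop k).length = 0 := by simp; omega
      rw [h2, h3, List.drop_zero, List.nil_append]
    rw [hdrop]
    have : s.length - t = k := by omega
    rw [this]
  · -- k + t > s.length
    set p := k + t - s.length with hp
    have hdrop : (s.drop k ++ s.take k).drop t = (s.drop p).take (s.length - t) := by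
      rw [List.drop_append]
      have h2 : (s.drop k).drop t = [] := by
        apply List.drop_eq_nil_of_le
        simp
        omega
      have h3 : t - (s.drop k).length = p := by simp; omega
      rw [h2, h3, List.nil_append, List.drop_take]
      congr 1
      omega
    rw [hdrop]
    have hlv := lyndon_val hLs (t := p) (by omega) (by omega)
    have := val_take_le (s.length - t) (by simp <;> omega) (le_of_lt hlv)
    rwa [List.take_take, min_eq_left (by omega)] at this

include hs hLs in
lemma Rlem {t : ℕ} (h0 : 0 < t) (h1 : t < s.length) :
    val ((s.dropLast.drop (s.length - t) ++ [false]) ++ (maxRot s).take (s.length - t)) <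
      val (maxRot s) := by
  have hrot : rot s (s.length - t) ≤ maxRot s := rot_le_maxRot s (by omega)
  rw [le_iff_val_le _ _ (by rw [rot_length, maxRot_length s (by omega)])] at hrot
  refine lt_of_lt_of_le ?_ hrot
  rw [rot]
  apply ext_lt
  · have hal : (maxRot s).length = s.length := maxRot_length s (by omega)
    simp [hal]
  · have hsd : s.dropLast.length = s.length - 1 := by simp
    have hdecomp : (s.dropLast ++ [true]).drop (s.length - t) =
        s.dropLast.drop (s.length - t) ++ [true] := by
      rw [List.drop_append, hsd]
      have h4 : s.length - t - (s.length - 1) = 0 := by omega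
      rw [h4, List.drop_zero]
    rw [lyndon_last hs hLs] at hdecomp
    rw [hdecomp, val_concat, val_concat]
    simp

end Core
end SW

namespace SW

/-- sequence of blocks given previous digit -/
def chain (s a : List Bool) : Bool → List Bool → List (List Bool)
  | _, [] => []
  | p, c :: cs => blk s a p c :: chain s a c cs

section Chain
variable {s : List Bool} (hs : 2 ≤ s.length) (hLs : IsLyndon s)

include hs hLs in
lemma blk_eq (x y : Bool) :
    blk s (maxRot s) x y = (if x then s.dropLast else (maxRot s).dropLast) ++ [y] := by
  cases x <;> cases y <;> simp [blk]
  · exact (maxRot_last hs hLs).symm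
  · exact (lyndon_last hs hLs).symm

include hs hLs in
lemma blk_length (x y : Bool) : (blk s (maxRot s) x y).length = s.length := by
  rw [blk_eq hs hLs]
  have hal : (maxRot s).length = s.length := maxRot_length s (by omega)
  cases x <;> simp [hal] <;> omega

lemma substWord_eq (c : Bool) (cs : List Bool) :
    substWord s (c :: cs) = (chain s (maxRot s) (!c) (c :: cs)).flatten := by
  have hzip : ∀ (cs : List Bool) (c : Bool),
      ((c :: cs).zip cs).map (fun p => blk s (maxRot s) p.1 p.2) = chain s (maxRot s) c cs := by
    intro cs
    induction cs with
    | nil => intro c; rfl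
    | cons d cs ih => intro c; simp [List.zip, chain, ← ih d]
  show blk s (maxRot s) (!c) c ++ _ = _
  rw [chain, List.flatten_cons]
  congr 1
  rw [← hzip cs c]
  rfl

include hs hLs in
lemma chain_flatten_length : ∀ (u : List Bool) (p : Bool),
    (chain s (maxRot s) p u).flatten.length = s.length * u.length := by
  intro u
  induction u with
  | nil => intro p; simp [chain]
  | cons c cs ih =>
    intro p
    rw [chain, List.flatten_cons, List.length_append, blk_length hs hLs, ih c]
    simp
    ring

include hs hLs in
lemma chain_drop : ∀ (q : ℕ) (u : List Bool) (p : Bool), q ≤ u.length →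
    (chain s (maxRot s) p u).flatten.drop (q * s.length) =
      (chain s (maxRot s) (if q = 0 then p else u.getD (q-1) true) (u.drop q)).flatten := by
  intro q
  induction q with
  | zero => intro u p _; simp
  | succ q ih =>
    intro u p hq
    match u with
    | c :: cs =>
      rw [chain, List.flatten_cons, List.drop_append]
      have h1 : (blk s (maxRot s) p c).drop ((q+1) * s.length) = [] := by
        apply List.drop_eq_nil_of_le
        rw [blk_length hs hLs]
        nlinarith
      have h2 : (q+1) * s.length - (blk s (maxRot s) p c).length = q * s.length := by
        rw [blk_length hs hLs]; ring_nf; omega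
      rw [h1, h2, List.nil_append]
      have := ih cs c (by simp at hq; omega)
      rw [this]
      congr 1
      cases q with
      | zero => simp
      | succ q' => simp

include hs hLs in
lemma chain_take : ∀ (k : ℕ) (u : List Bool) (p : Bool), k ≤ u.length →
    (chain s (maxRot s) p u).flatten.take (k * s.length) =
      (chain s (maxRot s) p (u.take k)).flatten := by
  intro k
  induction k with
  | zero => intro u p _; simp [chain]
  | succ k ih =>
    intro u p hk
    match u with
    | c :: cs =>
      have htc : (c :: cs).take (k+1) = c :: cs.take k := by simp
      rw [htc, chain, chain, List.flatten_cons, List.flatten_cons,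
        List.take_append]
      have h1 : (blk s (maxRot s) p c).take ((k+1) * s.length) = blk s (maxRot s) p c := by
        apply List.take_of_length_le
        rw [blk_length hs hLs]
        nlinarith
      have h2 : (k+1) * s.length - (blk s (maxRot s) p c).length = k * s.length := by
        rw [blk_length hs hLs]; ring_nf; omega
      rw [h1, h2, ih cs c (by simp at hk; omega)]

include hs hLs in
lemma CH : ∀ (u v : List Bool), u.length = v.length → val u < val v →
    ∀ p q : Bool, q ≤ p →
    val (chain s (maxRot s) p u).flatten < val (chain s (maxRot s) q v).flatten := by
  have hcore := core_lt hs hLs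
  have hblk : ∀ b1 b2 : Bool, val (blk s (maxRot s) b1 b2) =
      2 * val (if b1 then s.dropLast else (maxRot s).dropLast) + b2.toNat := by
    intro b1 b2
    rw [blk_eq hs hLs, val_concat]
  have hFF : val (blk s (maxRot s) false false) = 2 * val (maxRot s).dropLast := by
    rw [hblk]; simp
  have hFT : val (blk s (maxRot s) false true) = 2 * val (maxRot s).dropLast + 1 := by
    rw [hblk]; simp
  have hTF : val (blk s (maxRot s) true false) = 2 * val s.dropLast := by
    rw [hblk]; simp
  have hTT : val (blk s (maxRot s) true true) = 2 * val s.dropLast + 1 := by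
    rw [hblk]; simp
  intro u
  induction u with
  | nil =>
    intro v hlen hval p q hpq
    rw [(List.length_eq_zero_iff).mp hlen.symm] at hval
    exact absurd hval (by simp)
  | cons x u ih =>
    intro v hlen hval p q hpq
    match v with
    | y :: v =>
      simp only [List.length_cons, Nat.succ_inj] at hlen
      rw [chain, chain, List.flatten_cons, List.flatten_cons]
      have hvx : val (x :: u) = x.toNat * 2 ^ u.length + val u := rfl
      have hvy : val (y :: v) = y.toNat * 2 ^ v.length + val v := rfl
      rw [hvx, hvy, hlen] at hval
      have hu := val_lt u
      have hv := val_lt v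
      rw [hlen] at hu
      have hflen : (chain s (maxRot s) x u).flatten.length
          = (chain s (maxRot s) y v).flatten.length := by
        rw [chain_flatten_length hs hLs, chain_flatten_length hs hLs, hlen]
      have heqcase : ∀ z w : Bool, val u < val v →
          val (blk s (maxRot s) z w ++ (chain s (maxRot s) w u).flatten) <
          val (blk s (maxRot s) z w ++ (chain s (maxRot s) w v).flatten) := by
        intro z w hval'
        rw [val_append, val_append, chain_flatten_length hs hLs u,
          chain_flatten_length hs hLs v, hlen]
        have := ih v hlen hval' w w le_rfl
        omega
      cases x <;> cases y
      · -- x = y = false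
        have hval' : val u < val v := by
          simp only [Bool.toNat_false] at hval; omega
        cases p <;> cases q
        · exact heqcase false false hval'
        · exact absurd hpq (by simp)
        · exact ext_lt hflen (by rw [hTF, hFF]; omega)
        · exact heqcase true false hval'
      · -- x = false, y = true
        cases p <;> cases q
        · exact ext_lt hflen (by rw [hFF, hFT]; omega)
        · exact absurd hpq (by simp)
        · exact ext_lt hflen (by rw [hTF, hFT]; omega)
        · exact ext_lt hflen (by rw [hTF, hTT]; omega)
      · -- x = true, y = false : impossible
        exfalso
        simp only [Bool.toNat_true, Bool.toNat_false] at hval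
        omega
      · -- x = y = true
        have hval' : val u < val v := by
          simp only [Bool.toNat_true] at hval; omega
        cases p <;> cases q
        · exact heqcase false true hval'
        · exact absurd hpq (by simp)
        · exact ext_lt hflen (by rw [hTT, hFT]; omega)
        · exact heqcase true true hval'

end Chain
end SW

namespace SW

lemma take_concat_of_le {l' : List Bool} {c : Bool} {n : ℕ} (h : n ≤ l'.length) :
    (l' ++ [c]).take n = l'.take n := by
  rw [List.take_append]
  have : n - l'.length = 0 := by omega
  rw [this]
  simp

lemma drop_concat_of_le {l' : List Bool} {c : Bool} {n : ℕ} (h : n ≤ l'.length) :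
    (l' ++ [c]).drop n = l'.drop n ++ [c] := by
  rw [List.drop_append]
  have : n - l'.length = 0 := by omega
  rw [this]
  simp

section Win
variable {s : List Bool} (hs : 2 ≤ s.length) (hLs : IsLyndon s)

include hs hLs in
lemma take_s_core {n : ℕ} (h : n ≤ s.length - 1) : s.dropLast.take n = s.take n := by
  conv_rhs => rw [← lyndon_last hs hLs]
  rw [take_concat_of_le (by simp; omega)]

include hs hLs in
lemma drop_s_core {n : ℕ} (h : n ≤ s.length - 1) : s.drop n = s.dropLast.drop n ++ [true] := by
  conv_lhs => rw [← lyndon_last hs hLs]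
  rw [drop_concat_of_le (by simp; omega)]

include hs hLs in
lemma take_a_core {n : ℕ} (h : n ≤ s.length - 1) :
    (maxRot s).dropLast.take n = (maxRot s).take n := by
  conv_rhs => rw [← maxRot_last hs hLs]
  rw [take_concat_of_le (by rw [List.length_dropLast, maxRot_length s (by omega)]; omega)]

include hs hLs in
lemma drop_a_core {n : ℕ} (h : n ≤ s.length - 1) :
    (maxRot s).drop n = (maxRot s).dropLast.drop n ++ [false] := by
  conv_lhs => rw [← maxRot_last hs hLs]
  rw [drop_concat_of_le (by rw [List.length_dropLast, maxRot_length s (by omega)]; omega)]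

include hs hLs in
lemma winT (pq : Bool) {t : ℕ} (h0 : 0 < t) (h1 : t < s.length) :
    val (s.take (s.length - t)) <
      val ((if pq then s.dropLast else (maxRot s).dropLast).drop t ++ [true]) := by
  cases pq
  · -- core = a'
    simp only [if_neg Bool.false_ne_true]
    have h2 : (maxRot s).drop t = (maxRot s).dropLast.drop t ++ [false] :=
      drop_a_core hs hLs (by omega)
    have h3 := WK hs hLs h0 h1
    rw [h2, val_concat] at h3
    rw [val_concat]
    simp at h3 ⊢
    omega
  · -- core = s'
    simp only [if_pos rfl]
    have h2 : s.drop t = s.dropLast.drop t ++ [true] := drop_s_core hs hLs (by omega)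
    have h3 := lyndon_val hLs h0 h1
    rw [h2] at h3
    exact h3

include hs hLs in
lemma winF (pq : Bool) {t : ℕ} (h0 : 0 < t) (h1 : t < s.length) :
    val (s.take (s.length - t)) ≤
      val ((if pq then s.dropLast else (maxRot s).dropLast).drop t ++ [false]) := by
  cases pq
  · simp only [if_neg Bool.false_ne_true]
    have h2 : (maxRot s).drop t = (maxRot s).dropLast.drop t ++ [false] :=
      drop_a_core hs hLs (by omega)
    have h3 := WK hs hLs h0 h1
    rw [h2] at h3
    exact h3
  · simp only [if_pos rfl]
    have h2 : s.drop t = s.dropLast.drop t ++ [true] := drop_s_core hs hLs (by omega)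
    have h3 := lyndon_val hLs h0 h1
    rw [h2, val_concat] at h3
    rw [val_concat]
    simp at h3 ⊢
    omega

end Win
end SW

open SW in
/-- For Lyndon words `s, r` of length at least 2, the word `s • r = Φ_s(r)` is again a
Lyndon word, of length `|s|·|r|`. -/
theorem stmt7 (s r : List Bool) (hs : 2 ≤ s.length) (hr : 2 ≤ r.length)
    (hLs : IsLyndon s) (hLr : IsLyndon r) :
    IsLyndon (substWord s r) ∧ (substWord s r).length = s.length * r.length := by
  obtain ⟨rtl, hr0⟩ := head_decomp hr hLr
  have hm : 0 < s.length := by omega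
  have hal : (maxRot s).length = s.length := maxRot_length s hm
  have hw : substWord s r = (chain s (maxRot s) true r).flatten := by
    rw [hr0, substWord_eq false rtl]
    rfl
  have hWlen : (chain s (maxRot s) true r).flatten.length = s.length * r.length :=
    chain_flatten_length hs hLs r true
  constructor
  swap
  · rw [hw]; exact hWlen
  intro i hi0 hi
  rw [hw] at hi ⊢
  rw [hWlen] at hi ⊢
  rw [lt_iff_val_lt _ _ (by
      rw [List.length_take, List.length_drop, hWlen]
      omega)]
  obtain ⟨q, t, hqt, htm⟩ : ∃ q t, s.length * q + t = i ∧ t < s.length :=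
    ⟨i / s.length, i % s.length, Nat.div_add_mod i s.length, Nat.mod_lt _ hm⟩
  have hq : q < r.length := by
    by_contra hqc
    push_neg at hqc
    have : s.length * r.length ≤ s.length * q := Nat.mul_le_mul_left _ hqc
    omega
  have hc2 : s.length * r.length = r.length * s.length := mul_comm _ _
  have hc3 : s.length * q = q * s.length := mul_comm _ _
  by_cases ht0 : t = 0
  · -- suffix starts at a block boundary
    have hq0 : 0 < q := by
      rcases Nat.eq_zero_or_pos q with hqz | h
      · exfalso; rw [hqz, ht0] at hqt; simp at hqt; omega
      · exact h
    have hc4 : (r.length - q) * s.length = r.length * s.length - q * s.length :=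
      Nat.sub_mul _ _ _
    have hni : s.length * r.length - i = (r.length - q) * s.length := by omega
    have hiq : i = q * s.length := by omega
    rw [hni, hiq]
    rw [chain_take hs hLs (r.length - q) r true (by omega)]
    rw [chain_drop hs hLs q r true (by omega)]
    apply CH hs hLs
    · rw [List.length_take, List.length_drop]; omega
    · exact lyndon_val hLr (by omega) (by omega)
    · cases (if q = 0 then true else r.getD (q-1) true) <;> simp
  · -- suffix starts inside a block
    have ht0' : 0 < t := by omega
    have hs1 : s.dropLast.length = s.length - 1 := by simp
    -- suffix decomposition
    obtain ⟨y, rq', hy⟩ : ∃ y rq', r.drop q = y :: rq' := by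
      cases hrd : r.drop q with
      | nil => exfalso; have := congrArg List.length hrd; simp at this; omega
      | cons a b => exact ⟨a, b, rfl⟩
    have hrq'len : rq'.length = r.length - q - 1 := by
      have := congrArg List.length hy
      simp at this
      omega
    have hidrop : (chain s (maxRot s) true r).flatten.drop i =
        ((chain s (maxRot s) (if q = 0 then true else r.getD (q-1) true)
          (r.drop q)).flatten).drop t := by
      rw [← chain_drop hs hLs q r true (le_of_lt hq), List.drop_drop]
      congr 1
      omega
    have hcorelen : (if (if q = 0 then true else r.getD (q-1) true) then s.dropLast
        else (maxRot s).dropLast).length = s.length - 1 := by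
      cases (if q = 0 then true else r.getD (q-1) true) <;> simp [hal]
    have hSUF : (chain s (maxRot s) true r).flatten.drop i =
        (((if (if q = 0 then true else r.getD (q-1) true) then s.dropLast
          else (maxRot s).dropLast).drop t ++ [y]) ++
          (chain s (maxRot s) y rq').flatten) := by
      rw [hidrop, hy, chain, List.flatten_cons, blk_eq hs hLs]
      rw [List.drop_append]
      have h1 : t - ((if (if q = 0 then true else r.getD (q-1) true) then s.dropLast
          else (maxRot s).dropLast) ++ [y]).length = 0 := by
        rw [List.length_append, hcorelen]
        simp
        omega
      rw [h1, List.drop_zero]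
      congr 1
      rw [drop_concat_of_le (by rw [hcorelen]; omega)]
    -- prefix decomposition
    obtain ⟨r1, r2, hrtl⟩ : ∃ r1 r2, rtl = r1 :: r2 := by
      cases rtl with
      | nil => exfalso; rw [hr0] at hr; simp at hr
      | cons a b => exact ⟨a, b, rfl⟩
    have hrtllen : rtl.length = r.length - 1 := by rw [hr0]; simp
    have hbtf : blk s (maxRot s) true false = s.dropLast ++ [false] := by
      rw [blk_eq hs hLs]; simp
    have hWsplit : (chain s (maxRot s) true r).flatten =
        (s.dropLast ++ [false]) ++ (chain s (maxRot s) false rtl).flatten := by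
      rw [hr0, chain, List.flatten_cons, hbtf]
    have htk := take_s_core hs hLs (n := s.length - t) (by omega)
    have hW2 : (chain s (maxRot s) true r).flatten =
        s.take (s.length - t) ++ ((s.dropLast.drop (s.length - t) ++ [false]) ++
          (chain s (maxRot s) false rtl).flatten) := by
      rw [hWsplit, ← htk, ← List.append_assoc, ← List.append_assoc, List.take_append_drop]
    have e1 : (r.length - q - 1) * s.length
        = r.length * s.length - q * s.length - s.length := by
      rw [Nat.sub_mul, Nat.sub_mul, one_mul]
    have e4 : (q + 1) * s.length ≤ r.length * s.length := Nat.mul_le_mul_right _ hq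
    have e5 : (q + 1) * s.length = q * s.length + s.length := by ring
    have hKform : s.length * r.length - i
        = (s.length - t) + (r.length - q - 1) * s.length := by omega
    have hW₁len : (chain s (maxRot s) false rtl).flatten.length = s.length * rtl.length :=
      chain_flatten_length hs hLs rtl false
    have e6 : (r.length - q - 1) * s.length ≤ (r.length - 1) * s.length :=
      Nat.mul_le_mul_right _ (by omega)
    have e7 : s.length * (r.length - 1) = (r.length - 1) * s.length := mul_comm _ _
    have e12 : s.length * (r.length - q - 1) = (r.length - q - 1) * s.length := mul_comm _ _
    have hXslen : (s.dropLast.drop (s.length - t) ++ [false]).length = t := by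
      simp [hs1]
      omega
    have hPRE : (chain s (maxRot s) true r).flatten.take (s.length * r.length - i) =
        s.take (s.length - t) ++ (((s.dropLast.drop (s.length - t) ++ [false]) ++
          (chain s (maxRot s) false rtl).flatten).take ((r.length - q - 1) * s.length)) := by
      rw [hKform, hW2, List.take_append]
      congr 1
      · apply List.take_of_length_le
        rw [List.length_take]
        omega
      · congr 1
        rw [List.length_take]
        omega
    rw [hPRE, hSUF]
    have hflatylen : (chain s (maxRot s) y rq').flatten.length
        = s.length * rq'.length := chain_flatten_length hs hLs rq' y
    cases y
    · -- y = false : weak window + strict at next block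
      have hq1 : q + 1 < r.length := by
        by_contra hq1
        push_neg at hq1
        have hLq : q = r.length - 1 := by omega
        have hrlast := lyndon_last hr hLr
        have hdropL : r.drop (r.length - 1) = [true] := by
          conv_lhs => rw [← hrlast]
          rw [List.drop_left' (by simp)]
        rw [hLq, hdropL] at hy
        simp at hy
      obtain ⟨z, rq'', hz⟩ : ∃ z rq'', rq' = z :: rq'' := by
        cases hzz : rq' with
        | nil => exfalso; rw [hzz] at hrq'len; simp at hrq'len; omega
        | cons a b => exact ⟨a, b, rfl⟩
      have hrq''len : rq''.length = r.length - q - 2 := by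
        have := congrArg List.length hz
        simp at this
        omega
      have hbfz : blk s (maxRot s) false z = (maxRot s).dropLast ++ [z] := by
        rw [blk_eq hs hLs]; simp
      have hSUF2 : (chain s (maxRot s) false rq').flatten =
          ((maxRot s).dropLast ++ [z]) ++ (chain s (maxRot s) z rq'').flatten := by
        rw [hz, chain, List.flatten_cons, hbfz]
      have hbfr1 : blk s (maxRot s) false r1 = (maxRot s).dropLast ++ [r1] := by
        rw [blk_eq hs hLs]; simp
      have hta := take_a_core hs hLs (n := s.length - t) (by omega)
      have hW₁ : (chain s (maxRot s) false rtl).flatten =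
          (maxRot s).take (s.length - t) ++ (((maxRot s).dropLast.drop (s.length - t)
            ++ [r1]) ++ (chain s (maxRot s) r1 r2).flatten) := by
        rw [hrtl, chain, List.flatten_cons, hbfr1, ← hta,
          ← List.append_assoc, ← List.append_assoc, List.take_append_drop]
      have hW₂len : (chain s (maxRot s) r1 r2).flatten.length = s.length * r2.length :=
        chain_flatten_length hs hLs r2 r1
      have hr2len : r2.length = r.length - 2 := by
        have := congrArg List.length hrtl
        simp at this
        rw [hrtllen] at this
        omega
      have e8 : s.length ≤ (r.length - q - 1) * s.length := by
        calc s.length = 1 * s.length := (one_mul _).symm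
        _ ≤ (r.length - q - 1) * s.length := Nat.mul_le_mul_right _ (by omega)
      have e9 : (r.length - q - 2) * s.length
          = r.length * s.length - q * s.length - s.length - s.length := by
        rw [Nat.sub_mul, Nat.sub_mul]
        omega
      have e10 : (r.length - q - 2) * s.length ≤ (r.length - 2) * s.length :=
        Nat.mul_le_mul_right _ (by omega)
      have e11 : s.length * (r.length - 2) = (r.length - 2) * s.length := mul_comm _ _
      have e13 : s.length * (r.length - q - 2) = (r.length - q - 2) * s.length :=
        mul_comm _ _
      have haclen : (maxRot s).dropLast.length = s.length - 1 := by
        rw [List.length_dropLast, hal]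
      have hTK : (((s.dropLast.drop (s.length - t) ++ [false]) ++
            (chain s (maxRot s) false rtl).flatten).take ((r.length - q - 1) * s.length)) =
          (s.dropLast.drop (s.length - t) ++ [false]) ++
            ((maxRot s).take (s.length - t) ++
              ((((maxRot s).dropLast.drop (s.length - t) ++ [r1]) ++
                (chain s (maxRot s) r1 r2).flatten).take
                  ((r.length - q - 1) * s.length - s.length))) := by
        rw [List.take_append]
        congr 1
        · apply List.take_of_length_le
          rw [hXslen]
          omega
        · rw [hXslen, hW₁, List.take_append]
          congr 1
          · apply List.take_of_length_le
            rw [List.length_take, hal]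
            omega
          · congr 1
            rw [List.length_take, hal]
            omega
      rw [hTK, hSUF2]
      apply ext_le_lt
      · -- lengths of tails
        have hcf := chain_flatten_length hs hLs rq'' z
        simp [hal, hs1, haclen, hW₂len, hr2len, hcf, hrq''len]
        omega
      · exact winF hs hLs _ ht0' htm
      · rw [← List.append_assoc]
        apply ext_lt
        · have hcf := chain_flatten_length hs hLs rq'' z
          simp [hal, hs1, haclen, hW₂len, hr2len, hcf, hrq''len]
          omega
        · have hR := Rlem hs hLs ht0' htm
          have hva : val (maxRot s) = 2 * val (maxRot s).dropLast := by
            conv_lhs => rw [← maxRot_last hs hLs]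
            rw [val_concat]
            rfl
          have hvz : val ((maxRot s).dropLast ++ [z]) =
              2 * val (maxRot s).dropLast + z.toNat := val_concat _ _
          omega
    · -- y = true : strict window
      apply ext_lt
      · rw [List.length_take, hflatylen, hrq'len, List.length_append, hXslen,
          hW₁len, hrtllen]
        omega
      · exact winT hs hLs _ ht0' htm
end

section
/- For every Farey word s = s_1…s_m of length m ≥ 2, the word s^- obtained by changing the last digit of s from 1 to 0 is a palindrome: s_1…s_{m-1}0 read backwards equals itself. -/
/-- One step of the Farey-word construction: insert `w v` between neighbors `w, v`. -/
def fareyStep : List (List Bool) → List (List Bool)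
  | [] => []
  | [w] => [w]
  | w :: v :: rest => w :: (w ++ v) :: fareyStep (v :: rest)

/-- The ordered sets `F_n` of Farey words, with `F_0 = (0, 1)`. -/
def farey : ℕ → List (List Bool)
  | 0 => [[false], [true]]
  | n + 1 => fareyStep (farey n)

/-- A Farey word is an element of some `F_n`. -/
def IsFarey (w : List Bool) : Prop := ∃ n, w ∈ farey n

/-- A non-degenerate Farey word: a Farey word other than the single letters `0` and `1`,
equivalently of length at least two. -/
def IsFareyND (w : List Bool) : Prop := IsFarey w ∧ 2 ≤ w.length

/-! The neighbours `(u, v)` in `F_n` are images of `(0, 1)` under composites of the two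
substitutions replacing one letter by `01`, since inserting `uv` between `u` and `v` commutes with
any substitution. Every such image is a letter or `0c1` with `c` a palindrome, because this shape
is preserved by both substitutions: `σ(0c1)` is `0(1σ(c))1` or `0(σ(c)0)1`, and `1σ(c)`, `σ(c)0`
are palindromes as every letter `x` satisfies `1σ(x) = σ(x)ʳ1`, resp. `0σ(x)ʳ = σ(x)0`.
For `s = 0c1` the word `s⁻ = 0c0` is then a palindrome. -/

namespace List

variable {α : Type*}

theorem cons_flatMap_eq_flatMap_append {f g : α → List α} {a : α}
    (h : ∀ x, a :: f x = g x ++ [a]) (l : List α) :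
    a :: l.flatMap f = l.flatMap g ++ [a] := by
  induction l with
  | nil => rfl
  | cons x l ih =>
    rw [flatMap_cons, flatMap_cons, ← cons_append, h x, append_assoc, singleton_append, ih,
      append_assoc]

theorem Palindrome.cons_flatMap {f : α → List α} {a : α}
    (hf : ∀ x, a :: f x = (f x).reverse ++ [a]) {l : List α} (hl : l.Palindrome) :
    (a :: l.flatMap f).Palindrome := by
  refine .of_reverse_eq ?_
  rw [reverse_cons, reverse_flatMap, hl.reverse_eq, cons_flatMap_eq_flatMap_append hf]
  rfl

theorem Palindrome.flatMap_append {f : α → List α} {a : α}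
    (hf : ∀ x, a :: (f x).reverse = f x ++ [a]) {l : List α} (hl : l.Palindrome) :
    (l.flatMap f ++ [a]).Palindrome := by
  refine .of_reverse_eq ?_
  rw [reverse_append, reverse_flatMap, hl.reverse_eq]
  exact cons_flatMap_eq_flatMap_append hf l

end List

open List

def fareySubst (b : Bool) : List Bool → List Bool :=
  flatMap fun x => if x = b then [false, true] else [x]

theorem fareySubst_append (b : Bool) (u v : List Bool) :
    fareySubst b (u ++ v) = fareySubst b u ++ fareySubst b v :=
  flatMap_append

def IsLetterOrPalindromicCore (w : List Bool) : Prop :=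
  w = [false] ∨ w = [true] ∨ ∃ c : List Bool, c.Palindrome ∧ w = false :: (c ++ [true])

theorem IsLetterOrPalindromicCore.fareySubst {w : List Bool} (hw : IsLetterOrPalindromicCore w)
    (b : Bool) : IsLetterOrPalindromicCore (fareySubst b w) := by
  rcases hw with rfl | rfl | ⟨c, hc, rfl⟩
  · cases b
    · exact .inr <| .inr ⟨[], .nil, rfl⟩
    · exact .inl rfl
  · cases b
    · exact .inr <| .inl rfl
    · exact .inr <| .inr ⟨[], .nil, rfl⟩
  · refine .inr <| .inr ?_
    cases b
    · refine ⟨true :: _root_.fareySubst false c, hc.cons_flatMap (by decide), ?_⟩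
      simp [_root_.fareySubst]
    · refine ⟨_root_.fareySubst true c ++ [false], hc.flatMap_append (by decide), ?_⟩
      simp [_root_.fareySubst]

inductive FareyPair : List Bool → List Bool → Prop
  | base : FareyPair [false] [true]
  | subst (b : Bool) {u v : List Bool} : FareyPair u v → FareyPair (fareySubst b u) (fareySubst b v)

namespace FareyPair

variable {u v : List Bool}

theorem left (h : FareyPair u v) : FareyPair u (u ++ v) := by
  induction h with
  | base => exact subst true base
  | subst b _ ih => rw [← fareySubst_append]; exact ih.subst b

theorem right (h : FareyPair u v) : FareyPair (u ++ v) v := by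
  induction h with
  | base => exact subst false base
  | subst b _ ih => rw [← fareySubst_append]; exact ih.subst b

theorem isLetterOrPalindromicCore (h : FareyPair u v) :
    IsLetterOrPalindromicCore u ∧ IsLetterOrPalindromicCore v := by
  induction h with
  | base => exact ⟨.inl rfl, .inr (.inl rfl)⟩
  | subst b _ ih => exact ⟨ih.1.fareySubst b, ih.2.fareySubst b⟩

theorem isLetterOrPalindromicCore_append (h : FareyPair u v) :
    IsLetterOrPalindromicCore (u ++ v) :=
  h.left.isLetterOrPalindromicCore.2

end FareyPair

theorem fareyStep_cons (v : List Bool) (rest : List (List Bool)) :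
    ∃ t, fareyStep (v :: rest) = v :: t := by
  cases rest <;> exact ⟨_, rfl⟩

theorem isChain_fareyStep {l : List (List Bool)} (hl : l.IsChain FareyPair) :
    (fareyStep l).IsChain FareyPair := by
  induction l using fareyStep.induct with
  | case1 | case2 => exact hl
  | case3 w v rest ih =>
    obtain ⟨hwv, hrest⟩ := isChain_cons_cons.mp hl
    obtain ⟨t, ht⟩ := fareyStep_cons v rest
    have hstep := ih hrest
    rw [ht] at hstep
    rw [fareyStep, ht]
    exact .cons_cons hwv.left (.cons_cons hwv.right hstep)

theorem mem_fareyStep {R : List Bool → List Bool → Prop} {l : List (List Bool)}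
    (hl : l.IsChain R) {w : List Bool} (hw : w ∈ fareyStep l) :
    w ∈ l ∨ ∃ u v, R u v ∧ w = u ++ v := by
  induction l using fareyStep.induct with
  | case1 | case2 => exact .inl hw
  | case3 x y rest ih =>
    obtain ⟨hxy, hrest⟩ := isChain_cons_cons.mp hl
    rcases mem_cons.mp hw with rfl | hw
    · exact .inl mem_cons_self
    rcases mem_cons.mp hw with rfl | hw
    · exact .inr ⟨x, y, hxy, rfl⟩
    exact (ih hrest hw).imp (mem_cons_of_mem _) id

theorem farey_isChain (n : ℕ) : (farey n).IsChain FareyPair := by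
  induction n with
  | zero => exact isChain_pair.mpr .base
  | succ n ih => exact isChain_fareyStep ih

theorem isLetterOrPalindromicCore_of_mem_farey {n : ℕ} {w : List Bool} (hw : w ∈ farey n) :
    IsLetterOrPalindromicCore w := by
  induction n generalizing w with
  | zero =>
    rcases mem_pair.mp hw with rfl | rfl
    exacts [.inl rfl, .inr (.inl rfl)]
  | succ n ih =>
    rcases mem_fareyStep (farey_isChain n) hw with hw | ⟨u, v, huv, rfl⟩
    exacts [ih hw, huv.isLetterOrPalindromicCore_append]

/-- For every non-degenerate Farey word `s`, the word `s⁻` (last digit changed from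
`1` to `0`) is a palindrome. -/
theorem stmt12 (s : List Bool) (h : IsFareyND s) :
    (s.dropLast ++ [false]).reverse = s.dropLast ++ [false] := by
  obtain ⟨⟨n, hn⟩, hlen⟩ := h
  rcases isLetterOrPalindromicCore_of_mem_farey hn with rfl | rfl | ⟨c, hc, rfl⟩
  · simp at hlen
  · simp at hlen
  rw [← cons_append, dropLast_concat]
  exact (hc.cons_concat false).reverse_eq
end
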